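/- arXiv:2001.00061 — 8 statements merged into one kernel-verified Lean document; each statement's English description precedes it below -/
import Mathlib

section
/- Let f be a rational Herglotz–Nevanlinna function with smallest pole h₁ (or no finite pole), let μ < h₁ and τ > f(μ). Then the function f̃(λ) := (μ − λ)/(f(λ) − τ) − τ is again a rational Herglotz–Nevanlinna function with ind f̃ = ind f + 1. -/
open scoped BigOperators

/-- A rational Herglotz–Nevanlinna function
`f(λ) = h₀ λ + h + ∑_{k=1}^d δ_k / (h_k − λ)`
with `h₀ ≥ 0`, `δ_k > 0` and `h₁ < … < h_d`. -/
structure RHN where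
  d : ℕ
  h0 : ℝ
  h : ℝ
  residue : Fin d → ℝ
  pole : Fin d → ℝ
  h0_nonneg : 0 ≤ h0
  residue_pos : ∀ k, 0 < residue k
  pole_strictMono : StrictMono pole

namespace RHN

/-- The value `f(λ)`. -/
noncomputable def eval (f : RHN) (x : ℝ) : ℝ :=
  f.h0 * x + f.h + ∑ k, f.residue k / (f.pole k - x)

/-- The index: `2d + 1` if `h₀ > 0`, and `2d` otherwise. -/
noncomputable def ind (f : RHN) : ℤ :=
  if 0 < f.h0 then 2 * f.d + 1 else 2 * f.d

end RHN

/-!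
Write `f - τ = A / V` with `V = ∏ (X - h_k)` and `A = f.numerator τ`. The polynomial `A` has
alternating signs at `μ < h₁ < ⋯ < h_d` (and, when `h₀ > 0`, is positive far to the right), so
it has `n = deg A` simple zeros `z_i > μ` and `A = c ∏ (X - z_i)`. Lagrange interpolation gives
the partial fraction expansion of `(μ - λ) V / A`, whose residue at `z_i` is
`(z_i - μ) / f'(z_i) > 0` since `A'(z_i) = f'(z_i) V(z_i)` and `f' > 0`. The linear coefficient
is `1 / (τ - h)` if `h₀ = 0` and `0` if `h₀ > 0`, which shifts the index by one in both cases.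
-/

open Polynomial Finset Lagrange

section Semiring

variable {R : Type*} [Semiring R]

theorem natDegree_C_mul_add_le {M r : R[X]} {m : ℕ} (a : R) (hM : M.natDegree = m)
    (hr : r.degree < m) : (C a * M + r).natDegree ≤ m :=
  natDegree_add_le_of_degree_le ((natDegree_C_mul_le a M).trans hM.le)
    (natDegree_le_of_degree_le hr.le)

theorem coeff_C_mul_add_of_degree_lt {M r : R[X]} {m : ℕ} (a : R) (hM : M.Monic)
    (hMm : M.natDegree = m) (hr : r.degree < m) : (C a * M + r).coeff m = a := by
  rw [coeff_add, coeff_C_mul, ← hMm, hM.coeff_natDegree, hMm, coeff_eq_zero_of_degree_lt hr,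
    mul_one, add_zero]

end Semiring

theorem coeff_sub_C_mul_monic_eq_zero {R : Type*} [Ring R] {p q : R[X]} {m k : ℕ}
    (hp : p.natDegree ≤ m) (hq : q.Monic) (hqm : q.natDegree = m) (hk : m ≤ k) :
    (p - C (p.coeff m) * q).coeff k = 0 := by
  rcases hk.eq_or_lt with rfl | hk
  · rw [coeff_sub, coeff_C_mul, ← hqm, hq.coeff_natDegree, hqm, mul_one, sub_self]
  · rw [coeff_sub, coeff_C_mul, coeff_eq_zero_of_natDegree_lt (hp.trans_lt hk),
      coeff_eq_zero_of_natDegree_lt (hqm.trans_lt hk), mul_zero, sub_zero]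

theorem C_sub_X_mul {R : Type*} [CommRing R] (a : R) (p : R[X]) :
    (C a - X) * p = C (-1) * (X * p) + C a * p := by
  simp only [map_neg, map_one]
  ring

section Lagrange

variable {F ι : Type*} [Field F] {s : Finset ι} {v : ι → F}

theorem eq_C_mul_nodal_of_eval_eq_zero (hvs : Set.InjOn v s) {p : F[X]}
    (hp : p.natDegree ≤ #s) (hzero : ∀ i ∈ s, p.eval (v i) = 0) :
    p = C (p.coeff #s) * nodal s v := by
  refine eq_of_degree_sub_lt_of_eval_index_eq s hvs ?_ fun i hi => ?_
  · exact (degree_lt_iff_coeff_zero _ _).2 fun k hk =>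
      coeff_sub_C_mul_monic_eq_zero hp nodal_monic natDegree_nodal hk
  · rw [hzero i hi, eval_mul, eval_nodal_at_node hi, mul_zero]

theorem eval_derivative_nodal_ne_zero [DecidableEq ι] (hvs : Set.InjOn v s) {i : ι}
    (hi : i ∈ s) : (derivative (nodal s v)).eval (v i) ≠ 0 := fun h =>
  nodalWeight_ne_zero hvs hi (by rw [nodalWeight_eq_eval_derivative_nodal hi, h, inv_zero])

theorem exists_eval_eq_eval_nodal_mul_partialFractions [DecidableEq ι] (hvs : Set.InjOn v s)
    {p : F[X]} (hp : p.natDegree ≤ #s + 1) :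
    ∃ b : F, ∀ x, (∀ i ∈ s, x ≠ v i) →
      p.eval x = (nodal s v).eval x * (p.coeff (#s + 1) * x + b +
        ∑ i ∈ s, nodalWeight s v i * (x - v i)⁻¹ * p.eval (v i)) := by
  set W := nodal s v
  have hXW : (X * W).natDegree = #s + 1 := by
    rw [natDegree_X_mul nodal_ne_zero, natDegree_nodal]
  set p₁ := p - C (p.coeff (#s + 1)) * (X * W)
  have hp₁ : p₁.natDegree ≤ #s := natDegree_le_iff_coeff_eq_zero.2 fun k hk =>
    coeff_sub_C_mul_monic_eq_zero hp (monic_X.mul nodal_monic) hXW hk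
  set r := p₁ - C (p₁.coeff #s) * W
  have hr : r.degree < #s := (degree_lt_iff_coeff_zero _ _).2 fun k hk =>
    coeff_sub_C_mul_monic_eq_zero hp₁ nodal_monic natDegree_nodal hk
  have hr_node : ∀ i ∈ s, r.eval (v i) = p.eval (v i) := fun i hi => by
    simp [r, p₁, W, eval_nodal_at_node hi]
  refine ⟨p₁.coeff #s, fun x hx => ?_⟩
  have hrx := congrArg (eval x) (eq_interpolate hvs hr)
  rw [eval_interpolate_not_at_node _ hx, sum_congr rfl fun i hi => by rw [hr_node i hi]] at hrx
  have hpr : p = C (p.coeff (#s + 1)) * (X * W) + C (p₁.coeff #s) * W + r := by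
    simp only [r, p₁]
    ring
  rw [congrArg (eval x) hpr, eval_add, eval_add, eval_mul, eval_mul, eval_mul, eval_C, eval_C,
    eval_X, hrx]
  ring

end Lagrange

theorem exists_mem_Ioo_eq_zero_of_mul_neg {g : ℝ → ℝ} {a b : ℝ} (hab : a ≤ b)
    (hg : ContinuousOn g (Set.Icc a b)) (hsign : g a * g b < 0) :
    ∃ z ∈ Set.Ioo a b, g z = 0 := by
  have h0 : (0 : ℝ) ∈ Set.uIcc (g a) (g b) := by
    rcases mul_neg_iff.1 hsign with ⟨ha, hb⟩ | ⟨ha, hb⟩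
    · exact Set.mem_uIcc.2 (Or.inr ⟨hb.le, ha.le⟩)
    · exact Set.mem_uIcc.2 (Or.inl ⟨ha.le, hb.le⟩)
  rw [← Set.uIcc_of_le hab] at hg
  obtain ⟨z, hz, hgz⟩ := intermediate_value_uIcc hg h0
  rw [Set.uIcc_of_le hab] at hz
  refine ⟨z, ⟨hz.1.lt_of_ne ?_, hz.2.lt_of_ne ?_⟩, hgz⟩ <;> rintro rfl <;>
    simp [hgz] at hsign

theorem exists_strictMono_zeros_of_alternating {n : ℕ} {g : ℝ → ℝ} (hg : Continuous g)
    {b : Fin (n + 1) → ℝ} (hb : StrictMono b)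
    (hsign : ∀ i : Fin (n + 1), 0 < (-1) ^ (n - i : ℕ) * g (b i)) :
    ∃ z : Fin n → ℝ, StrictMono z ∧ (∀ i, g (z i) = 0) ∧ ∀ i, b 0 < z i := by
  have hgap : ∀ i : Fin n, ∃ z ∈ Set.Ioo (b i.castSucc) (b i.succ), g z = 0 := fun i => by
    refine exists_mem_Ioo_eq_zero_of_mul_neg (hb i.castSucc_lt_succ).le hg.continuousOn ?_
    have h₁ := hsign i.castSucc
    have h₂ := hsign i.succ
    have he : n - (i.castSucc : ℕ) = (n - i.succ) + 1 := by
      simp only [Fin.val_castSucc, Fin.val_succ]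
      omega
    rw [he, pow_succ] at h₁
    have hsq : ((-1 : ℝ) ^ (n - (i.succ : ℕ))) ^ 2 = 1 := by
      rw [← pow_mul, pow_mul', neg_one_sq, one_pow]
    nlinarith [mul_pos h₁ h₂]
  choose z hz hgz using hgap
  refine ⟨z, fun i j hij => (hz i).2.trans_le ((hb.monotone ?_).trans (hz j).1.le), hgz,
    fun i => (hb.monotone (Fin.zero_le _)).trans_lt (hz i).1⟩
  rw [Fin.le_def, Fin.val_succ, Fin.val_castSucc]
  exact hij

theorem neg_one_pow_card_filter_mul_prod_sub_pos {ι : Type*} (s : Finset ι) (p : ι → ℝ)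
    {x : ℝ} (hx : ∀ i ∈ s, x ≠ p i) :
    0 < (-1) ^ #{i ∈ s | x < p i} * ∏ i ∈ s, (x - p i) := by
  classical
  have hsplit : ∏ i ∈ s, (x - p i) =
      (-1) ^ #{i ∈ s | x < p i} * ((∏ i ∈ s with x < p i, (p i - x)) *
        ∏ i ∈ s with ¬x < p i, (x - p i)) := by
    rw [← prod_filter_mul_prod_filter_not s (fun i => x < p i), ← mul_assoc, ← prod_neg]
    simp only [neg_sub]
  have hpos :
      0 < (∏ i ∈ s with x < p i, (p i - x)) * ∏ i ∈ s with ¬x < p i, (x - p i) := by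
    refine mul_pos (prod_pos fun i hi => ?_) (prod_pos fun i hi => ?_)
    · exact sub_pos.2 (mem_filter.1 hi).2
    · obtain ⟨hi, hlt⟩ := mem_filter.1 hi
      exact sub_pos.2 ((not_lt.1 hlt).lt_of_ne' (hx i hi))
  rwa [hsplit, ← mul_assoc, ← pow_add, Even.neg_one_pow ⟨_, rfl⟩, one_mul]

namespace RHN

variable (f : RHN)

theorem hasDerivAt_eval {x : ℝ} (hx : ∀ k, x ≠ f.pole k) :
    HasDerivAt f.eval (f.h0 + ∑ k, f.residue k / (f.pole k - x) ^ 2) x := by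
  have hterm : ∀ k ∈ (univ : Finset (Fin f.d)),
      HasDerivAt (fun y => f.residue k / (f.pole k - y)) (f.residue k / (f.pole k - x) ^ 2) x :=
    fun k _ => by
    simpa [div_eq_mul_inv] using (((hasDerivAt_id x).const_sub (f.pole k)).inv
      (sub_ne_zero.2 (hx k).symm)).const_mul (f.residue k)
  have hlin : HasDerivAt (fun y => f.h0 * y + f.h) f.h0 x := by
    simpa using ((hasDerivAt_id x).const_mul f.h0).add_const f.h
  exact hlin.add (HasDerivAt.fun_sum hterm)

theorem deriv_eval_nonneg {x : ℝ} (hx : ∀ k, x ≠ f.pole k) : 0 ≤ deriv f.eval x := by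
  rw [(f.hasDerivAt_eval hx).deriv]
  exact add_nonneg f.h0_nonneg (sum_nonneg fun k _ => div_nonneg (f.residue_pos k).le (sq_nonneg _))

/-- `f - τ = f.numerator τ / ∏ (X - h_k)` away from the poles. -/
noncomputable def numerator (τ : ℝ) : ℝ[X] :=
  C f.h0 * (X * nodal univ f.pole) + C (f.h - τ) * nodal univ f.pole -
    ∑ k, C (f.residue k) * nodal (univ.erase k) f.pole

theorem degree_sum_residue_lt :
    (∑ k, C (f.residue k) * nodal (univ.erase k) f.pole).degree < f.d := by
  refine (degree_sum_le _ _).trans_lt ((Finset.sup_lt_iff (WithBot.bot_lt_coe _)).2 fun k _ => ?_)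
  rw [degree_C_mul (f.residue_pos k).ne', degree_nodal, card_erase_of_mem (mem_univ k), card_univ,
    Fintype.card_fin]
  exact WithBot.coe_lt_coe.2 (Nat.sub_lt k.pos one_pos)

theorem natDegree_X_mul_nodal_pole : (X * nodal univ f.pole).natDegree = f.d + 1 := by
  rw [natDegree_X_mul nodal_ne_zero, natDegree_nodal, card_univ, Fintype.card_fin]

theorem degree_C_mul_nodal_pole_lt (a : ℝ) : (C a * nodal univ f.pole).degree < ↑(f.d + 1) := by
  refine degree_le_natDegree.trans_lt (WithBot.coe_lt_coe.2 ?_)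
  refine (natDegree_C_mul_le a _).trans_lt ?_
  rw [natDegree_nodal, card_univ, Fintype.card_fin]
  exact f.d.lt_succ_self

theorem degree_C_mul_nodal_sub_sum_residue_lt (a : ℝ) :
    (C a * nodal univ f.pole - ∑ k, C (f.residue k) * nodal (univ.erase k) f.pole).degree <
      ↑(f.d + 1) :=
  (degree_sub_le _ _).trans_lt (max_lt (f.degree_C_mul_nodal_pole_lt a)
    (f.degree_sum_residue_lt.trans (WithBot.coe_lt_coe.2 f.d.lt_succ_self)))

theorem natDegree_numerator_le (τ : ℝ) : (f.numerator τ).natDegree ≤ f.d + 1 := by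
  rw [numerator, add_sub_assoc]
  exact natDegree_C_mul_add_le _ f.natDegree_X_mul_nodal_pole
    (f.degree_C_mul_nodal_sub_sum_residue_lt _)

theorem coeff_numerator_succ (τ : ℝ) : (f.numerator τ).coeff (f.d + 1) = f.h0 := by
  rw [numerator, add_sub_assoc]
  exact coeff_C_mul_add_of_degree_lt _ (monic_X.mul nodal_monic) f.natDegree_X_mul_nodal_pole
    (f.degree_C_mul_nodal_sub_sum_residue_lt _)

theorem numerator_eq_of_h0_eq_zero (h0 : f.h0 = 0) (τ : ℝ) : f.numerator τ =
    C (f.h - τ) * nodal univ f.pole + -∑ k, C (f.residue k) * nodal (univ.erase k) f.pole := by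
  simp [numerator, h0, sub_eq_add_neg]

theorem natDegree_numerator_le_of_h0_eq_zero (h0 : f.h0 = 0) (τ : ℝ) :
    (f.numerator τ).natDegree ≤ f.d := by
  rw [f.numerator_eq_of_h0_eq_zero h0]
  exact natDegree_C_mul_add_le _ (by simp [natDegree_nodal])
    (by simpa using f.degree_sum_residue_lt)

theorem coeff_numerator_of_h0_eq_zero (h0 : f.h0 = 0) (τ : ℝ) :
    (f.numerator τ).coeff f.d = f.h - τ := by
  rw [f.numerator_eq_of_h0_eq_zero h0]
  exact coeff_C_mul_add_of_degree_lt _ nodal_monic (by simp [natDegree_nodal])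
    (by simpa using f.degree_sum_residue_lt)

theorem natDegree_C_sub_X_mul_nodal_pole_le (μ : ℝ) :
    ((C μ - X) * nodal univ f.pole).natDegree ≤ f.d + 1 := by
  rw [C_sub_X_mul]
  exact natDegree_C_mul_add_le _ f.natDegree_X_mul_nodal_pole (f.degree_C_mul_nodal_pole_lt μ)

theorem coeff_C_sub_X_mul_nodal_pole (μ : ℝ) :
    ((C μ - X) * nodal univ f.pole).coeff (f.d + 1) = -1 := by
  rw [C_sub_X_mul]
  exact coeff_C_mul_add_of_degree_lt _ (monic_X.mul nodal_monic) f.natDegree_X_mul_nodal_pole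
    (f.degree_C_mul_nodal_pole_lt μ)

theorem exists_gt_eval_numerator_pos (h0 : 0 < f.h0) (τ μ : ℝ) :
    ∃ M, μ < M ∧ (∀ k, f.pole k < M) ∧ 0 < (f.numerator τ).eval M := by
  have hcoeff := f.coeff_numerator_succ τ
  have hdeg : (f.numerator τ).natDegree = f.d + 1 := le_antisymm (f.natDegree_numerator_le τ)
    (le_natDegree_of_ne_zero (hcoeff ▸ h0.ne'))
  have htend := tendsto_atTop_of_leadingCoeff_nonneg _
    (natDegree_pos_iff_degree_pos.1 (by rw [hdeg]; exact f.d.succ_pos))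
    (by rw [leadingCoeff, hdeg, hcoeff]; exact h0.le)
  obtain ⟨M, hμM, hM, hAM⟩ := ((Filter.eventually_gt_atTop μ).and
    ((Filter.eventually_all.2 fun k => Filter.eventually_gt_atTop (f.pole k)).and
      (htend.eventually_gt_atTop 0))).exists
  exact ⟨M, hμM, hM, hAM⟩

variable {f}

theorem eval_numerator (τ : ℝ) {x : ℝ} (hx : ∀ k, x ≠ f.pole k) :
    (f.numerator τ).eval x = (f.eval x - τ) * (nodal univ f.pole).eval x := by
  have hterm : ∀ k, f.residue k / (f.pole k - x) * (nodal univ f.pole).eval x =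
      -(f.residue k * (nodal (univ.erase k) f.pole).eval x) := fun k => by
    rw [nodal_eq_mul_nodal_erase (mem_univ k), eval_mul, eval_sub, eval_X, eval_C]
    field_simp [sub_ne_zero.2 (hx k).symm]
    ring
  simp only [numerator, eval, eval_sub, eval_add, eval_mul, eval_C, eval_X, eval_finsetSum,
    add_mul, sub_mul, sum_mul, hterm, sum_neg_distrib]
  ring

theorem eval_numerator_pole (τ : ℝ) (k : Fin f.d) :
    (f.numerator τ).eval (f.pole k) =
      -(f.residue k * ∏ j ∈ univ.erase k, (f.pole k - f.pole j)) := by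
  rw [numerator, eval_sub, eval_finsetSum, sum_eq_single k]
  · simp [eval_nodal_at_node (mem_univ k), eval_nodal]
  · intro j _ hjk
    rw [eval_mul, eval_nodal_at_node (mem_erase.2 ⟨hjk.symm, mem_univ k⟩), mul_zero]
  · simp

theorem neg_one_pow_mul_neg_eval_numerator_pos {μ τ : ℝ} (hμ : ∀ k, μ < f.pole k)
    (hτ : f.eval μ < τ) : 0 < (-1) ^ f.d * -(f.numerator τ).eval μ := by
  have hsign := neg_one_pow_card_filter_mul_prod_sub_pos univ f.pole fun k _ => (hμ k).ne
  rw [filter_true_of_mem fun k _ => hμ k, card_univ, Fintype.card_fin, ← eval_nodal] at hsign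
  rw [eval_numerator τ fun k => (hμ k).ne]
  nlinarith [mul_pos (sub_pos.2 hτ) hsign]

theorem neg_one_pow_mul_neg_eval_numerator_pole_pos (τ : ℝ) (k : Fin f.d) :
    0 < (-1) ^ (f.d - 1 - k : ℕ) * -(f.numerator τ).eval (f.pole k) := by
  have hsign := neg_one_pow_card_filter_mul_prod_sub_pos (univ.erase k) f.pole fun j hj =>
    f.pole_strictMono.injective.ne (ne_of_mem_erase hj).symm
  have hfilter : {j ∈ univ.erase k | f.pole k < f.pole j} = Ioi k := by
    ext j
    simp only [mem_filter, mem_erase, mem_univ, mem_Ioi, f.pole_strictMono.lt_iff_lt]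
    exact ⟨fun h => h.2, fun h => ⟨⟨h.ne', trivial⟩, h⟩⟩
  rw [hfilter, Fin.card_Ioi] at hsign
  rw [eval_numerator_pole, neg_neg, mul_left_comm]
  exact mul_pos (f.residue_pos k) hsign

theorem eval_numerator_pole_ne_zero (τ : ℝ) (k : Fin f.d) :
    (f.numerator τ).eval (f.pole k) ≠ 0 := fun h => by
  simpa [h] using neg_one_pow_mul_neg_eval_numerator_pole_pos τ k

theorem h_lt_of_h0_eq_zero (h0 : f.h0 = 0) {μ τ : ℝ} (hμ : ∀ k, μ < f.pole k)
    (hτ : f.eval μ < τ) : f.h < τ := by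
  have hsum : 0 ≤ ∑ k, f.residue k / (f.pole k - μ) :=
    sum_nonneg fun k _ => (div_pos (f.residue_pos k) (sub_pos.2 (hμ k))).le
  rw [eval, h0] at hτ
  linarith

theorem exists_strictMono_zeros_numerator {μ τ : ℝ} (hμ : ∀ k, μ < f.pole k)
    (hτ : f.eval μ < τ) :
    ∃ z : Fin f.d → ℝ, StrictMono z ∧ (∀ i, (f.numerator τ).eval (z i) = 0) ∧
      ∀ i, μ < z i := by
  obtain ⟨z, hz, hzero, hμz⟩ := exists_strictMono_zeros_of_alternating
    (f.numerator τ).continuous.neg (Fin.strictMono_cons.2 ⟨hμ, f.pole_strictMono⟩) fun i => by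
      refine Fin.cases ?_ (fun k => ?_) i
      · simpa using neg_one_pow_mul_neg_eval_numerator_pos hμ hτ
      · simpa [Nat.sub_sub, add_comm] using neg_one_pow_mul_neg_eval_numerator_pole_pos τ k
  exact ⟨z, hz, fun i => neg_eq_zero.1 (hzero i), fun i => by simpa using hμz i⟩

theorem exists_strictMono_zeros_numerator_of_h0_pos (h0 : 0 < f.h0) {μ τ : ℝ}
    (hμ : ∀ k, μ < f.pole k) (hτ : f.eval μ < τ) :
    ∃ z : Fin (f.d + 1) → ℝ, StrictMono z ∧ (∀ i, (f.numerator τ).eval (z i) = 0) ∧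
      ∀ i, μ < z i := by
  obtain ⟨M, hμM, hM, hAM⟩ := f.exists_gt_eval_numerator_pos h0 τ μ
  have hsnoc : StrictMono (Fin.snoc f.pole M : Fin (f.d + 1) → ℝ) := by
    rw [← Fin.insertNth_last', Fin.strictMono_insertNth_iff]
    exact ⟨f.pole_strictMono, fun i _ => hM i,
      fun i hi => absurd hi (not_le.2 (Fin.castSucc_lt_last i))⟩
  have hcons : StrictMono (Fin.cons μ (Fin.snoc f.pole M) : Fin (f.d + 2) → ℝ) :=
    Fin.strictMono_cons.2 ⟨fun j => Fin.lastCases (by simpa using hμM)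
      (fun k => by simpa using hμ k) j, hsnoc⟩
  obtain ⟨z, hz, hzero, hμz⟩ := exists_strictMono_zeros_of_alternating
    (f.numerator τ).continuous hcons fun i => by
      refine Fin.cases ?_ (fun j => Fin.lastCases ?_ (fun k => ?_) j) i
      · have := neg_one_pow_mul_neg_eval_numerator_pos hμ hτ
        simp only [Fin.cons_zero, Fin.val_zero, Nat.sub_zero, pow_succ]
        linarith
      · simpa using hAM
      · have := neg_one_pow_mul_neg_eval_numerator_pole_pos τ k
        have hk : f.d + 1 - (k + 1) = f.d - 1 - k + 1 := by omega
        simp only [Fin.cons_succ, Fin.snoc_castSucc, Fin.val_succ, Fin.val_castSucc, hk, pow_succ]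
        linarith
  exact ⟨z, hz, hzero, fun i => by simpa using hμz i⟩

theorem eval_derivative_numerator {τ y : ℝ} (hy : ∀ k, y ≠ f.pole k)
    (hzero : (f.numerator τ).eval y = 0) :
    (derivative (f.numerator τ)).eval y = deriv f.eval y * (nodal univ f.pole).eval y := by
  have hfy : f.eval y = τ := by
    rw [eval_numerator τ hy] at hzero
    exact sub_eq_zero.1 ((mul_eq_zero.1 hzero).resolve_right
      (eval_nodal_not_at_node fun k _ => hy k))
  have hnear : (fun x => (f.numerator τ).eval x) =ᶠ[nhds y]
      fun x => (f.eval x - τ) * (nodal univ f.pole).eval x := by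
    filter_upwards [Filter.eventually_all.2 fun k => eventually_ne_nhds (hy k)] with x hx
    exact eval_numerator τ hx
  have hderiv := ((f.hasDerivAt_eval hy).sub_const τ).mul ((nodal univ f.pole).hasDerivAt y)
  rw [(f.numerator τ).hasDerivAt y |>.unique (hderiv.congr_of_eventuallyEq hnear), hfy, sub_self,
    zero_mul, add_zero, (f.hasDerivAt_eval hy).deriv]

section Zeros

variable {τ L : ℝ} {n : ℕ} {z : Fin n → ℝ}

theorem ne_pole_of_numerator_eq (hA : f.numerator τ = C L * nodal univ z) (i : Fin n)
    (k : Fin f.d) : z i ≠ f.pole k := fun h => eval_numerator_pole_ne_zero τ k <| by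
  rw [← h, hA, eval_mul, eval_nodal_at_node (mem_univ i), mul_zero]

theorem mul_eval_derivative_nodal_eq (hA : f.numerator τ = C L * nodal univ z) (i : Fin n) :
    L * (derivative (nodal univ z)).eval (z i) =
      deriv f.eval (z i) * (nodal univ f.pole).eval (z i) := by
  rw [← eval_derivative_numerator (ne_pole_of_numerator_eq hA i)
    (by rw [hA, eval_mul, eval_nodal_at_node (mem_univ i), mul_zero]),
    hA, derivative_C_mul, eval_mul, eval_C]

theorem deriv_eval_pos_of_numerator_eq (hA : f.numerator τ = C L * nodal univ z) (hL : L ≠ 0)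
    (hz : Function.Injective z) (i : Fin n) : 0 < deriv f.eval (z i) :=
  (deriv_eval_nonneg f (ne_pole_of_numerator_eq hA i)).lt_of_ne' fun h =>
    mul_ne_zero hL (eval_derivative_nodal_ne_zero hz.injOn (mem_univ i))
      (by rw [mul_eval_derivative_nodal_eq hA, h, zero_mul])

theorem exists_div_eq_partialFractions {μ a : ℝ} (hz : Function.Injective z) (hdn : f.d ≤ n)
    (hA : f.numerator τ = C L * nodal univ z) (hL : L ≠ 0)
    (htop : ((C μ - X) * nodal univ f.pole).coeff (n + 1) = a * L) :
    ∃ b, ∀ x, (∀ k, x ≠ f.pole k) → (∀ i, x ≠ z i) →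
      (μ - x) / (f.eval x - τ) =
        a * x + b + ∑ i, (z i - μ) / deriv f.eval (z i) / (z i - x) := by
  obtain ⟨b, hb⟩ := exists_eval_eq_eval_nodal_mul_partialFractions (s := univ) hz.injOn
    (p := (C μ - X) * nodal univ f.pole)
    (by simpa using (f.natDegree_C_sub_X_mul_nodal_pole_le μ).trans (by omega))
  simp only [card_univ, Fintype.card_fin, mem_univ, forall_const, htop] at hb
  refine ⟨b / L, fun x hx hxz => ?_⟩
  have hterm : ∀ i,
      nodalWeight univ z i * (x - z i)⁻¹ * ((C μ - X) * nodal univ f.pole).eval (z i) =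
        L * ((z i - μ) / deriv f.eval (z i) / (z i - x)) := fun i => by
    rw [nodalWeight_eq_eval_derivative_nodal (mem_univ i), eval_mul, eval_sub, eval_C, eval_X]
    field_simp [eval_derivative_nodal_ne_zero hz.injOn (mem_univ i),
      (deriv_eval_pos_of_numerator_eq hA hL hz i).ne', sub_ne_zero.2 (hxz i),
      sub_ne_zero.2 (hxz i).symm]
    linear_combination (z i - μ) * (z i - x) * mul_eval_derivative_nodal_eq hA i
  set S := ∑ i, (z i - μ) / deriv f.eval (z i) / (z i - x)
  have hQx : (μ - x) * (nodal univ f.pole).eval x =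
      (nodal univ z).eval x * (a * L * x + b + L * S) := by
    have := hb x hxz
    rw [sum_congr rfl fun i _ => hterm i, ← mul_sum] at this
    simpa using this
  have hAx : (f.eval x - τ) * (nodal univ f.pole).eval x = L * (nodal univ z).eval x := by
    rw [← eval_numerator τ hx, hA, eval_mul, eval_C]
  have hVx : (nodal univ f.pole).eval x ≠ 0 := eval_nodal_not_at_node fun k _ => hx k
  have hfx : f.eval x - τ ≠ 0 := fun h =>
    mul_ne_zero hL (eval_nodal_not_at_node fun i _ => hxz i) (by rw [← hAx, h, zero_mul])
  rw [div_eq_iff hfx]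
  refine mul_right_cancel₀ hVx ?_
  rw [hQx, mul_assoc _ (f.eval x - τ), hAx]
  field_simp

theorem exists_eq_tilde_of_zeros {μ a : ℝ} (ha : 0 ≤ a) (hdn : f.d ≤ n)
    (hdeg : (f.numerator τ).natDegree ≤ n) (hlead : (f.numerator τ).coeff n ≠ 0)
    (htop : ((C μ - X) * nodal univ f.pole).coeff (n + 1) = a * (f.numerator τ).coeff n)
    (hz : StrictMono z) (hzero : ∀ i, (f.numerator τ).eval (z i) = 0) (hμz : ∀ i, μ < z i) :
    ∃ g : RHN, g.d = n ∧ g.h0 = a ∧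
      ∀ x, (∀ k, x ≠ f.pole k) → (∀ k, x ≠ g.pole k) →
        g.eval x = (μ - x) / (f.eval x - τ) - τ := by
  have hA := eq_C_mul_nodal_of_eval_eq_zero (s := univ) hz.injective.injOn
    (by rwa [card_univ, Fintype.card_fin]) fun i _ => hzero i
  rw [card_univ, Fintype.card_fin] at hA
  obtain ⟨b, hb⟩ := exists_div_eq_partialFractions hz.injective hdn hA hlead htop
  refine ⟨⟨n, a, b - τ, fun i => (z i - μ) / deriv f.eval (z i), z, ha, fun i => div_pos
    (sub_pos.2 (hμz i)) (deriv_eval_pos_of_numerator_eq hA hlead hz.injective i), hz⟩, rfl, rfl,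
    fun x hx hxz => ?_⟩
  rw [hb x hx hxz]
  simp only [eval]
  ring

end Zeros

end RHN

/-- if `μ` is smaller than every pole of `f` and `τ > f(μ)`, then
`f̃(λ) := (μ − λ)/(f(λ) − τ) − τ` is again a rational Herglotz–Nevanlinna function
with `ind f̃ = ind f + 1`. -/
theorem tilde_transform_is_RHN (f : RHN) (μ τ : ℝ)
    (hμ : ∀ k, μ < f.pole k) (hτ : f.eval μ < τ) :
    ∃ g : RHN, g.ind = f.ind + 1 ∧
      ∀ x : ℝ, (∀ k, x ≠ f.pole k) → (∀ k, x ≠ g.pole k) → f.eval x ≠ τ →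
        g.eval x = (μ - x) / (f.eval x - τ) - τ := by
  by_cases h0 : 0 < f.h0
  · obtain ⟨z, hz, hzero, hμz⟩ := f.exists_strictMono_zeros_numerator_of_h0_pos h0 hμ hτ
    have htop : ((C μ - X) * nodal univ f.pole).coeff (f.d + 1 + 1) = 0 :=
      coeff_eq_zero_of_natDegree_lt (Nat.lt_succ_of_le (f.natDegree_C_sub_X_mul_nodal_pole_le μ))
    obtain ⟨g, hgd, hgh0, hg⟩ := f.exists_eq_tilde_of_zeros le_rfl f.d.le_succ
      (f.natDegree_numerator_le τ) (f.coeff_numerator_succ τ ▸ h0.ne') (by rw [htop, zero_mul])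
      hz hzero hμz
    refine ⟨g, ?_, fun x hx hxg _ => hg x hx hxg⟩
    rw [RHN.ind, RHN.ind, hgd, hgh0, if_neg (lt_irrefl 0), if_pos h0]
    push_cast
    ring
  · replace h0 : f.h0 = 0 := le_antisymm (not_lt.1 h0) f.h0_nonneg
    have hh : f.h < τ := f.h_lt_of_h0_eq_zero h0 hμ hτ
    obtain ⟨z, hz, hzero, hμz⟩ := f.exists_strictMono_zeros_numerator hμ hτ
    obtain ⟨g, hgd, hgh0, hg⟩ := f.exists_eq_tilde_of_zeros (inv_nonneg.2 (sub_nonneg.2 hh.le))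
      le_rfl (f.natDegree_numerator_le_of_h0_eq_zero h0 τ)
      (by rw [f.coeff_numerator_of_h0_eq_zero h0]; exact (sub_neg.2 hh).ne)
      (by rw [f.coeff_C_sub_X_mul_nodal_pole, f.coeff_numerator_of_h0_eq_zero h0, ← neg_sub τ,
        mul_neg, inv_mul_cancel₀ (sub_pos.2 hh).ne']) hz hzero hμz
    refine ⟨g, ?_, fun x hx hxg _ => hg x hx hxg⟩
    simp [RHN.ind, hgd, hgh0, h0, hh]
end

section
/- Let f be a rational Herglotz–Nevanlinna function written as f = f↑/f↓ where f↓(λ) := h₀′ Π_{k=1}^d (h_k − λ) with h₀′ = 1/h₀ if h₀ > 0 and h₀′ = 1 otherwise. Let μ be less than the smallest pole of f, and let f̂ := λ ↦ (μ − λ)/(f(λ) − f(μ)) − f(μ). Then f̂↑(λ) = [ −f(μ) f↑(λ) − (λ − μ − f(μ)²) f↓(λ) ] / (λ − μ) and f̂↓(λ) = [ f↑(λ) − f(μ) f↓(λ) ] / (λ − μ), and in particular both right-hand sides are polynomials in λ. -/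
/-
Put `N := f↑ − f(μ) f↓` and `M := (μ − λ) f↓ − f(μ) N`. Away from finitely many points
`f̂ = M / N`, so `f̂↑ N = M f̂↓` as polynomials. Both `N` and `M` vanish at `μ`, and the quotients
`N = (λ − μ) N'`, `M = (λ − μ) M'` satisfy `M' = −f↓ − f(μ) N'`; hence `N'` and `M'` are coprime
because `f↑` and `f↓` are. As `f̂↑` and `f̂↓` are coprime as well, `(N', M') = c (f̂↓, f̂↑)` for a
constant `c ≠ 0`. Comparing top coefficients, which the normalisation `h₀′` fixes, in the cases
`h₀ > 0` and `h₀ = 0` gives `c = 1`.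
-/

open scoped BigOperators

namespace RHN

open Polynomial

/-- `h₀′ := 1/h₀` if `h₀ > 0`, and `1` otherwise. -/
noncomputable def h0' (f : RHN) : ℝ := if 0 < f.h0 then 1 / f.h0 else 1

/-- The denominator polynomial `f↓(λ) := h₀′ ∏_{k=1}^d (h_k − λ)`. -/
noncomputable def pdown (f : RHN) : Polynomial ℝ :=
  C f.h0' * ∏ k, (C (f.pole k) - X)

/-- The numerator polynomial `f↑ := f · f↓`, written out explicitly. -/
noncomputable def pup (f : RHN) : Polynomial ℝ :=
  C f.h0' * ((C f.h0 * X + C f.h) * ∏ k, (C (f.pole k) - X)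
    + ∑ k, C (f.residue k) * ∏ j ∈ Finset.univ.erase k, (C (f.pole j) - X))

end RHN

open Polynomial

lemma Polynomial.prod_C_sub_X {ι R : Type*} [CommRing R] (s : Finset ι) (b : ι → R) :
    ∏ j ∈ s, (C (b j) - X) = (-1) ^ s.card * ∏ j ∈ s, (X - C (b j)) := by
  rw [← Finset.prod_neg]
  simp only [neg_sub]

lemma Polynomial.natDegree_prod_C_sub_X {ι R : Type*} [CommRing R] [Nontrivial R]
    (s : Finset ι) (b : ι → R) : (∏ j ∈ s, (C (b j) - X)).natDegree = s.card := by
  rw [prod_C_sub_X, ← C_1, ← C_neg, ← C_pow, natDegree_C_mul_of_isUnit (isUnit_neg_one.pow _)]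
  exact natDegree_finsetProd_X_sub_C_eq_card s b

theorem IsCoprime.exists_isUnit_of_mul_eq_mul {R : Type*} [CommRing R] [IsDomain R]
    {p q n m : R} (hp : p ≠ 0) (hpq : IsCoprime p q) (hnm : IsCoprime n m) (h : q * n = m * p) :
    ∃ u, IsUnit u ∧ n = u * p ∧ m = u * q := by
  obtain ⟨u, hn⟩ : p ∣ n := hpq.dvd_of_dvd_mul_left ⟨m, by linear_combination h⟩
  have hm : m = u * q := mul_right_cancel₀ hp (by rw [← h, hn]; ring)
  rw [mul_comm] at hn
  exact ⟨u, hnm.isUnit_of_dvd' (hn ▸ dvd_mul_right u p) (hm ▸ dvd_mul_right u q), hn, hm⟩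

namespace RHN

variable (f g : RHN)

lemma h0'_pos : 0 < f.h0' := by
  unfold h0'
  split_ifs with h
  · positivity
  · exact one_pos

lemma h0_mul_h0' (h : 0 < f.h0) : f.h0 * f.h0' = 1 := by
  rw [h0', if_pos h, mul_one_div_cancel h.ne']

lemma h0'_eq_one (h : f.h0 = 0) : f.h0' = 1 := by
  rw [h0', if_neg h.not_gt]

noncomputable def pupRem : ℝ[X] :=
  C f.h0' * ∑ k, C (f.residue k) * ∏ j ∈ Finset.univ.erase k, (C (f.pole j) - X)

lemma pup_eq : f.pup = (C f.h0 * X + C f.h) * f.pdown + f.pupRem := by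
  rw [pup, pdown, pupRem]
  ring

lemma pupRem_coeff {n : ℕ} (hn : f.d ≤ n) : f.pupRem.coeff n = 0 := by
  rw [pupRem, coeff_C_mul, finsetSum_coeff, Finset.sum_eq_zero, mul_zero]
  intro k _
  refine coeff_eq_zero_of_natDegree_lt (natDegree_C_mul_le _ _ |>.trans_lt ?_)
  rw [natDegree_prod_C_sub_X, Finset.card_erase_of_mem (Finset.mem_univ k), Finset.card_univ,
    Fintype.card_fin]
  have := k.pos
  omega

lemma pdown_eq : f.pdown = C (f.h0' * (-1) ^ f.d) * ∏ k, (X - C (f.pole k)) := by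
  rw [pdown, prod_C_sub_X, Finset.card_univ, Fintype.card_fin, C_mul, C_pow, C_neg, C_1,
    mul_assoc]

lemma pdown_natDegree : f.pdown.natDegree = f.d := by
  rw [pdown, natDegree_C_mul f.h0'_pos.ne', natDegree_prod_C_sub_X, Finset.card_univ,
    Fintype.card_fin]

lemma pdown_leadingCoeff : f.pdown.leadingCoeff = f.h0' * (-1) ^ f.d := by
  rw [pdown_eq, leadingCoeff_mul, leadingCoeff_C, (monic_prod_X_sub_C _ _).leadingCoeff, mul_one]

lemma pdown_ne_zero : f.pdown ≠ 0 := by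
  rw [← leadingCoeff_ne_zero, pdown_leadingCoeff]
  exact mul_ne_zero f.h0'_pos.ne' (by simp)

lemma pdown_coeff_d : f.pdown.coeff f.d = f.h0' * (-1) ^ f.d := by
  rw [← pdown_leadingCoeff, leadingCoeff, pdown_natDegree]

lemma pdown_coeff {n : ℕ} (hn : f.d < n) : f.pdown.coeff n = 0 :=
  coeff_eq_zero_of_natDegree_lt (f.pdown_natDegree ▸ hn)

lemma pup_coeff_d_add_one : f.pup.coeff (f.d + 1) = f.h0 * f.h0' * (-1) ^ f.d := by
  rw [pup_eq, coeff_add, add_mul, coeff_add, mul_assoc, coeff_C_mul, coeff_X_mul, coeff_C_mul,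
    pdown_coeff_d, f.pdown_coeff (by omega), f.pupRem_coeff (by omega)]
  ring

lemma pup_coeff {n : ℕ} (hn : f.d + 1 < n) : f.pup.coeff n = 0 := by
  obtain ⟨m, rfl⟩ : ∃ m, n = m + 1 := ⟨n - 1, by omega⟩
  rw [pup_eq, coeff_add, add_mul, coeff_add, mul_assoc, coeff_C_mul, coeff_X_mul, coeff_C_mul,
    f.pdown_coeff (by omega), f.pdown_coeff (by omega), f.pupRem_coeff (by omega)]
  ring

lemma pup_sub_C_mul_pdown_coeff_d_add_one (a : ℝ) :
    (f.pup - C a * f.pdown).coeff (f.d + 1) = f.h0 * f.h0' * (-1) ^ f.d := by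
  rw [coeff_sub, coeff_C_mul, pup_coeff_d_add_one, f.pdown_coeff (by omega), mul_zero, sub_zero]

lemma pup_sub_C_mul_pdown_coeff (a : ℝ) {n : ℕ} (hn : f.d + 1 < n) :
    (f.pup - C a * f.pdown).coeff n = 0 := by
  rw [coeff_sub, coeff_C_mul, f.pup_coeff hn, f.pdown_coeff (by omega), mul_zero, sub_zero]

lemma pdown_eval (x : ℝ) : f.pdown.eval x = f.h0' * ∏ k, (f.pole k - x) := by
  simp [pdown, eval_prod]

lemma pdown_eval_pole (k : Fin f.d) : f.pdown.eval (f.pole k) = 0 := by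
  rw [pdown_eval, Finset.prod_eq_zero (Finset.mem_univ k) (sub_self _), mul_zero]

lemma pup_eval {x : ℝ} (hx : ∀ k, x ≠ f.pole k) : f.pup.eval x = f.pdown.eval x * f.eval x := by
  have hsplit : ∀ k, (∏ j, (f.pole j - x)) * (f.residue k / (f.pole k - x))
      = f.residue k * ∏ j ∈ Finset.univ.erase k, (f.pole j - x) := fun k => by
    rw [← Finset.mul_prod_erase _ _ (Finset.mem_univ k)]
    field_simp [sub_ne_zero.2 (hx k).symm]
  simp only [pup, pdown, eval, eval_mul, eval_add, eval_sub, eval_C, eval_X, eval_prod,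
    eval_finsetSum, mul_add, Finset.mul_sum, mul_assoc, hsplit]
  ring

lemma pup_eval_pole (k : Fin f.d) : f.pup.eval (f.pole k)
    = f.h0' * (f.residue k * ∏ j ∈ Finset.univ.erase k, (f.pole j - f.pole k)) := by
  rw [pup_eq, eval_add, eval_mul, pdown_eval_pole, mul_zero, zero_add, pupRem]
  simp only [eval_mul, eval_C, eval_finsetSum, eval_prod, eval_sub, eval_X]
  rw [Finset.sum_eq_single k (fun i _ hik => ?_) (by simp)]
  rw [Finset.prod_eq_zero (Finset.mem_erase.2 ⟨Ne.symm hik, Finset.mem_univ k⟩) (sub_self _),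
    mul_zero]

lemma pup_eval_pole_ne_zero (k : Fin f.d) : f.pup.eval (f.pole k) ≠ 0 := by
  rw [pup_eval_pole]
  refine mul_ne_zero f.h0'_pos.ne' (mul_ne_zero (f.residue_pos k).ne'
    (Finset.prod_ne_zero_iff.2 fun j hj => sub_ne_zero.2 fun h => ?_))
  exact (Finset.mem_erase.1 hj).1 (f.pole_strictMono.injective h)

lemma isCoprime_pdown_pup : IsCoprime f.pdown f.pup := by
  have hunit : IsUnit (C (f.h0' * (-1) ^ f.d)) :=
    isUnit_C.2 (mul_ne_zero f.h0'_pos.ne' (by simp)).isUnit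
  rw [pdown_eq, isCoprime_mul_unit_left_left hunit]
  refine IsCoprime.prod_left fun k _ => ?_
  rw [(irreducible_X_sub_C _).coprime_iff_not_dvd, dvd_iff_isRoot]
  exact f.pup_eval_pole_ne_zero k

lemma pup_sub_C_mul_pdown_ne_zero (hind : 1 ≤ f.ind) (a : ℝ) :
    f.pup - C a * f.pdown ≠ 0 := by
  rcases f.h0_nonneg.lt_or_eq with hf | hf
  · intro h
    have := f.pup_sub_C_mul_pdown_coeff_d_add_one a
    rw [h, coeff_zero, f.h0_mul_h0' hf, one_mul] at this
    exact pow_ne_zero _ (by norm_num) this.symm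
  · have hd : 0 < f.d := by
      rw [ind, if_neg hf.symm.not_gt] at hind
      omega
    intro h
    have := congrArg (Polynomial.eval (f.pole ⟨0, hd⟩)) h
    rw [eval_sub, eval_mul, pdown_eval_pole, mul_zero, sub_zero, eval_zero] at this
    exact f.pup_eval_pole_ne_zero _ this

lemma pup_mul_eq_of_eval_mul_eq {P Q : ℝ[X]} {s : Set ℝ} (hs : s.Finite)
    (h : ∀ x ∉ s, (∀ k, x ≠ g.pole k) → g.eval x * Q.eval x = P.eval x) :
    g.pup * Q = P * g.pdown := by
  refine eq_of_infinite_eval_eq _ _ (Set.Infinite.mono (fun x hx => ?_)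
    (hs.union (Set.finite_range g.pole)).infinite_compl)
  obtain ⟨hxs, hxg⟩ := not_or.1 hx
  have hxg : ∀ k, x ≠ g.pole k := fun k hk => hxg ⟨k, hk.symm⟩
  simp only [Set.mem_ofPred_eq, eval_mul, g.pup_eval hxg, ← h x hxs hxg]
  ring

lemma pup_mul_eq_of_eval_eq_hat (μ : ℝ)
    (hN : f.pup - C (f.eval μ) * f.pdown ≠ 0)
    (hg : ∀ x : ℝ, x ≠ μ → (∀ k, x ≠ f.pole k) → (∀ k, x ≠ g.pole k) →
      g.eval x = (μ - x) / (f.eval x - f.eval μ) - f.eval μ) :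
    g.pup * (f.pup - C (f.eval μ) * f.pdown) =
      ((C μ - X) * f.pdown - C (f.eval μ) * (f.pup - C (f.eval μ) * f.pdown)) * g.pdown := by
  set N := f.pup - C (f.eval μ) * f.pdown with hN_def
  refine g.pup_mul_eq_of_eval_mul_eq (s := {μ} ∪ Set.range f.pole ∪ {x | N.IsRoot x})
    (((Set.finite_singleton μ).union (Set.finite_range _)).union (finite_setOfPred_isRoot hN))
    fun x hx hxg => ?_
  simp only [Set.mem_union, Set.mem_singleton_iff, Set.mem_range, Set.mem_ofPred_eq, not_or,
    not_exists] at hx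
  obtain ⟨⟨hxμ, hxf⟩, hxN⟩ := hx
  have hxf : ∀ k, x ≠ f.pole k := fun k hk => hxf k hk.symm
  have hN : N.eval x = f.pdown.eval x * (f.eval x - f.eval μ) := by
    rw [hN_def, eval_sub, eval_mul, eval_C, f.pup_eval hxf]
    ring
  have hfx : f.eval x - f.eval μ ≠ 0 := fun h => hxN (by rw [IsRoot, hN, h, mul_zero])
  rw [hg x hxμ hxf hxg]
  simp only [hN_def, eval_sub, eval_mul, eval_C, eval_X, f.pup_eval hxf]
  field_simp

lemma isCoprime_of_mul_eq_pup_sub {a : ℝ} {p n : ℝ[X]}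
    (h : p * n = f.pup - C a * f.pdown) : IsCoprime n (-f.pdown - C a * n) := by
  have : IsCoprime f.pdown (p * n) := by
    rw [h, IsCoprime.sub_mul_right_right_iff]
    exact f.isCoprime_pdown_pup
  rw [show -f.pdown - C a * n = -(f.pdown + n * C a) by ring, IsCoprime.neg_right_iff]
  exact this.of_mul_right_right.symm.add_mul_left_right _

lemma natDegree_X_sub_C_mul_pdown (μ : ℝ) : ((X - C μ) * g.pdown).natDegree = g.d + 1 := by
  rw [natDegree_mul (X_sub_C_ne_zero μ) g.pdown_ne_zero, natDegree_X_sub_C, g.pdown_natDegree,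
    add_comm]

lemma leadingCoeff_X_sub_C_mul_pdown (μ : ℝ) :
    ((X - C μ) * g.pdown).leadingCoeff = g.h0' * (-1) ^ g.d := by
  rw [leadingCoeff_mul, leadingCoeff_X_sub_C, one_mul, pdown_leadingCoeff]

lemma pup_add_C_mul_pdown_coeff_d_add_one (a : ℝ) :
    (g.pup + C a * g.pdown).coeff (g.d + 1) = g.h0 * g.h0' * (-1) ^ g.d := by
  rw [coeff_add, coeff_C_mul, pup_coeff_d_add_one, g.pdown_coeff (by omega), mul_zero, add_zero]

lemma eq_one_of_C_mul_eq_of_h0_pos (hf : 0 < f.h0) {a μ c : ℝ} (hc : c ≠ 0)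
    (h₁ : f.pup - C a * f.pdown = C c * ((X - C μ) * g.pdown))
    (h₂ : -f.pdown = C c * (g.pup + C a * g.pdown)) : c = 1 := by
  have hdeg : (f.pup - C a * f.pdown).natDegree = f.d + 1 :=
    natDegree_eq_of_le_of_coeff_ne_zero
      (natDegree_le_iff_coeff_eq_zero.2 fun _ => f.pup_sub_C_mul_pdown_coeff a)
      (by rw [f.pup_sub_C_mul_pdown_coeff_d_add_one a, f.h0_mul_h0' hf]; simp)
  have hd : g.d = f.d := by
    have := congrArg natDegree h₁
    rw [hdeg, natDegree_C_mul hc, natDegree_X_sub_C_mul_pdown] at this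
    omega
  have hg : g.h0 = 0 := by
    have := congrArg (coeff · (f.d + 1)) h₂
    rw [coeff_neg, f.pdown_coeff (Nat.lt_succ_self _), neg_zero, coeff_C_mul, ← hd,
      pup_add_C_mul_pdown_coeff_d_add_one] at this
    simpa [hc, g.h0'_pos.ne'] using this
  have hlc := congrArg leadingCoeff h₁
  rw [leadingCoeff, hdeg, f.pup_sub_C_mul_pdown_coeff_d_add_one a, f.h0_mul_h0' hf,
    leadingCoeff_mul, leadingCoeff_C, leadingCoeff_X_sub_C_mul_pdown, g.h0'_eq_one hg, hd] at hlc
  simpa using hlc.symm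

lemma eq_one_of_C_mul_eq_of_h0_eq_zero (hf : f.h0 = 0) {a μ c : ℝ} (hc : c ≠ 0)
    (h₁ : f.pup - C a * f.pdown = C c * ((X - C μ) * g.pdown))
    (h₂ : -f.pdown = C c * (g.pup + C a * g.pdown)) : c = 1 := by
  have hdeg : (f.pup - C a * f.pdown).natDegree ≤ f.d := by
    refine natDegree_le_iff_coeff_eq_zero.2 fun n hn => ?_
    rcases (Nat.succ_le_of_lt hn).eq_or_lt with rfl | hn
    · rw [f.pup_sub_C_mul_pdown_coeff_d_add_one a, hf, zero_mul, zero_mul]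
    · exact f.pup_sub_C_mul_pdown_coeff a hn
  have hd : f.d = g.d + 1 := by
    have h₁' := congrArg natDegree h₁
    have h₂' := congrArg natDegree h₂
    rw [natDegree_C_mul hc, natDegree_X_sub_C_mul_pdown] at h₁'
    rw [natDegree_neg, pdown_natDegree, natDegree_C_mul hc] at h₂'
    have : (g.pup + C a * g.pdown).natDegree ≤ g.d + 1 :=
      natDegree_add_le_of_degree_le (natDegree_le_iff_coeff_eq_zero.2 fun _ => g.pup_coeff)
        ((natDegree_C_mul_le _ _).trans (g.pdown_natDegree.trans_le (Nat.le_succ _)))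
    omega
  have hg : c * (g.h0 * g.h0') = 1 := by
    have := congrArg (coeff · f.d) h₂
    rw [coeff_neg, pdown_coeff_d, f.h0'_eq_one hf, hd, coeff_C_mul,
      pup_add_C_mul_pdown_coeff_d_add_one, pow_succ] at this
    apply mul_right_cancel₀ (pow_ne_zero g.d (by norm_num : (-1 : ℝ) ≠ 0))
    linear_combination -this
  have hg_pos : 0 < g.h0 := g.h0_nonneg.lt_of_ne fun h => by simp [← h] at hg
  rwa [g.h0_mul_h0' hg_pos, mul_one] at hg

lemma eq_one_of_C_mul_eq {a μ c : ℝ} (hc : c ≠ 0)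
    (h₁ : f.pup - C a * f.pdown = C c * ((X - C μ) * g.pdown))
    (h₂ : -f.pdown = C c * (g.pup + C a * g.pdown)) : c = 1 := by
  rcases f.h0_nonneg.lt_or_eq with hf | hf
  · exact f.eq_one_of_C_mul_eq_of_h0_pos g hf hc h₁ h₂
  · exact f.eq_one_of_C_mul_eq_of_h0_eq_zero g hf.symm hc h₁ h₂

end RHN

open Polynomial in
/-- if `g` represents `f̂(λ) = (μ − λ)/(f(λ) − f(μ)) − f(μ)`, then
`(λ − μ)·f̂↑(λ) = −f(μ) f↑(λ) − (λ − μ − f(μ)²) f↓(λ)` and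
`(λ − μ)·f̂↓(λ) = f↑(λ) − f(μ) f↓(λ)`; in particular the right-hand sides are
divisible by `λ − μ` in `ℝ[λ]`. -/
theorem hat_transform_up_down (f g : RHN) (μ : ℝ)
    (hμ : ∀ k, μ < f.pole k) (hind : 1 ≤ f.ind)
    (hg : ∀ x : ℝ, x ≠ μ → (∀ k, x ≠ f.pole k) → (∀ k, x ≠ g.pole k) →
      g.eval x = (μ - x) / (f.eval x - f.eval μ) - f.eval μ) :
    (X - C μ) * g.pup =
      -(C (f.eval μ)) * f.pup - (X - C μ - C ((f.eval μ) ^ 2)) * f.pdown ∧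
    (X - C μ) * g.pdown = f.pup - C (f.eval μ) * f.pdown ∧
    (X - C μ) ∣ (-(C (f.eval μ)) * f.pup - (X - C μ - C ((f.eval μ) ^ 2)) * f.pdown) ∧
    (X - C μ) ∣ (f.pup - C (f.eval μ) * f.pdown) := by
  have hfrac := f.pup_mul_eq_of_eval_eq_hat g μ (f.pup_sub_C_mul_pdown_ne_zero hind _) hg
  obtain ⟨n, hn⟩ : X - C μ ∣ f.pup - C (f.eval μ) * f.pdown := by
    rw [dvd_iff_isRoot, IsRoot, eval_sub, eval_mul, eval_C, f.pup_eval fun k => (hμ k).ne]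
    ring
  generalize f.eval μ = a at hfrac hn ⊢
  have hid : g.pup * n = (-f.pdown - C a * n) * g.pdown := by
    rw [hn] at hfrac
    refine mul_left_cancel₀ (X_sub_C_ne_zero μ) ?_
    linear_combination hfrac
  obtain ⟨u, hu, hn_u, hm_u⟩ := IsCoprime.exists_isUnit_of_mul_eq_mul g.pdown_ne_zero
    g.isCoprime_pdown_pup (f.isCoprime_of_mul_eq_pup_sub hn.symm) hid
  obtain ⟨c, hc, rfl⟩ := Polynomial.isUnit_iff.1 hu
  obtain rfl : c = 1 := f.eq_one_of_C_mul_eq g hc.ne_zero (by rw [hn, hn_u]; ring)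
    (by linear_combination hm_u + C a * hn_u)
  rw [map_one, one_mul] at hn_u hm_u
  subst hn_u
  have hup : (X - C μ) * g.pup = -C a * f.pup - (X - C μ - C (a ^ 2)) * f.pdown := by
    rw [← hm_u, C_pow]
    linear_combination C a * hn
  exact ⟨hup, hn.symm, ⟨_, hup.symm⟩, ⟨_, hn⟩⟩
end

section
/- Define ω₁(f) := 1/h₀ if ind f is odd and nonnegative, ω₁(f) := −h if ind f is even and nonnegative, and ω₁(∞_n) := −n(n+1)/(2π) for the singularity symbol ∞_n of index −n−1. Let f be a rational Herglotz–Nevanlinna function with ind f ≥ 1, μ less than the smallest pole of f, and f̂ := Θ̂(μ, f). Then ω₁(f̂) − ω₁(f) = f(μ). -/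
open scoped BigOperators
namespace RHN

/-- `ω₁ := 1/h₀` if `ind f` is odd, `ω₁ := −h` if `ind f` is even. -/
noncomputable def omega1 (f : RHN) : ℝ := if Odd f.ind then 1 / f.h0 else -f.h

/-- `ω₂ := h/h₀ − ∑ h_k` if `ind f` is odd, `ω₂ := −∑ h_k` if `ind f` is even. -/
noncomputable def omega2 (f : RHN) : ℝ :=
  if Odd f.ind then f.h / f.h0 - ∑ k, f.pole k else -∑ k, f.pole k

end RHN

/-!
Both sides are read off from the behaviour at `+∞`, where `f(λ) = h₀λ + h + o(1)`. The identity
`f̂ = Θ̂(μ, f)` holds for all large `λ`. If `h₀ > 0`, then `Θ̂(μ, f)(λ) → -1/h₀ - f(μ)`, while `f̂`,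
of even index, tends to its constant term. If `h₀ = 0`, then `Θ̂(μ, f)(λ)/λ → 1/(f(μ) - h)`, while
`f̂(λ)/λ` tends to its slope; here `f(μ) > h` because `f` has a pole and all its poles lie to the
right of `μ`.
-/

open Filter Topology

/-- `Θ̂(μ, F)(λ)`. -/
noncomputable def thetaHat (μ : ℝ) (F : ℝ → ℝ) (x : ℝ) : ℝ :=
  (μ - x) / (F x - F μ) - F μ

lemma tendsto_sub_div_self_atTop (μ : ℝ) :
    Tendsto (fun x : ℝ => (μ - x) / x) atTop (𝓝 (-1)) := by
  have h : Tendsto (fun x : ℝ => μ / x - 1) atTop (𝓝 (0 - 1)) :=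
    (tendsto_const_nhds.div_atTop tendsto_id).sub_const 1
  rw [zero_sub] at h
  refine h.congr' ?_
  filter_upwards [eventually_ne_atTop 0] with x hx
  field_simp

lemma tendsto_thetaHat_atTop {μ a : ℝ} {F : ℝ → ℝ}
    (hF : Tendsto (fun x => (F x - F μ) / x) atTop (𝓝 a)) (ha : a ≠ 0) :
    Tendsto (thetaHat μ F) atTop (𝓝 (-1 / a - F μ)) := by
  have h : Tendsto (fun x => (μ - x) / x / ((F x - F μ) / x) - F μ) atTop (𝓝 (-1 / a - F μ)) :=
    ((tendsto_sub_div_self_atTop μ).div hF ha).sub_const (F μ)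
  refine h.congr' ?_
  filter_upwards [eventually_ne_atTop 0] with x hx
  rw [thetaHat, div_div_div_cancel_right₀ hx]

lemma tendsto_thetaHat_div_atTop {μ b : ℝ} {F : ℝ → ℝ}
    (hF : Tendsto F atTop (𝓝 b)) (hb : b ≠ F μ) :
    Tendsto (fun x => thetaHat μ F x / x) atTop (𝓝 (1 / (F μ - b))) := by
  have h : Tendsto (fun x => (μ - x) / x / (F x - F μ) - F μ / x) atTop
      (𝓝 (-1 / (b - F μ) - 0)) :=
    ((tendsto_sub_div_self_atTop μ).div (hF.sub_const (F μ)) (sub_ne_zero.2 hb)).sub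
      (tendsto_const_nhds.div_atTop tendsto_id)
  rw [sub_zero, ← neg_sub (F μ) b, div_neg, neg_div, neg_neg] at h
  refine h.congr fun x => ?_
  simp only [thetaHat]
  ring

namespace RHN

variable (f : RHN)

lemma odd_ind_iff : Odd f.ind ↔ 0 < f.h0 := by
  unfold ind
  split_ifs with h <;> simp [h, parity_simps]

lemma eventually_ne_pole : ∀ᶠ x in atTop, ∀ k, x ≠ f.pole k :=
  eventually_all.2 fun _ => eventually_ne_atTop _

lemma tendsto_sum_residue_div_atTop :
    Tendsto (fun x => ∑ k, f.residue k / (f.pole k - x)) atTop (𝓝 0) := by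
  rw [← Finset.sum_const_zero]
  refine tendsto_finsetSum _ fun k _ => tendsto_const_nhds.div_atBot ?_
  exact (tendsto_atBot_add_const_left _ (f.pole k) tendsto_neg_atTop_atBot).congr
    fun x => (sub_eq_add_neg _ _).symm

lemma tendsto_eval_sub_mul_atTop : Tendsto (fun x => f.eval x - f.h0 * x) atTop (𝓝 f.h) := by
  simpa [eval, add_sub_right_comm] using
    (tendsto_const_nhds (x := f.h)).add f.tendsto_sum_residue_div_atTop

lemma tendsto_eval_sub_div_atTop (c : ℝ) :
    Tendsto (fun x => (f.eval x - c) / x) atTop (𝓝 f.h0) := by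
  have h : Tendsto (fun x => f.h0 + (f.eval x - f.h0 * x - c) / x) atTop (𝓝 (f.h0 + 0)) :=
    tendsto_const_nhds.add ((f.tendsto_eval_sub_mul_atTop.sub_const c).div_atTop tendsto_id)
  rw [add_zero] at h
  refine h.congr' ?_
  filter_upwards [eventually_ne_atTop 0] with x hx
  field_simp
  ring

variable {f}

lemma omega1_of_h0_pos (h : 0 < f.h0) : f.omega1 = 1 / f.h0 := by
  simp [omega1, odd_ind_iff, h]

lemma omega1_of_h0_eq_zero (h : f.h0 = 0) : f.omega1 = -f.h := by
  simp [omega1, odd_ind_iff, h]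

lemma d_pos_of_one_le_ind (h0 : f.h0 = 0) (h : 1 ≤ f.ind) : 0 < f.d := by
  simp only [ind, h0, lt_irrefl, if_false] at h
  omega

lemma h0_mul_add_h_lt_eval (hd : 0 < f.d) {x : ℝ} (hx : ∀ k, x < f.pole k) :
    f.h0 * x + f.h < f.eval x := by
  have : Nonempty (Fin f.d) := Fin.pos_iff_nonempty.1 hd
  have hsum : 0 < ∑ k, f.residue k / (f.pole k - x) :=
    Finset.sum_pos (fun k _ => div_pos (f.residue_pos k) (sub_pos.2 (hx k))) Finset.univ_nonempty
  simp only [eval]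
  linarith

lemma tendsto_eval_of_h0_eq_zero (h : f.h0 = 0) : Tendsto f.eval atTop (𝓝 f.h) := by
  simpa [h] using f.tendsto_eval_sub_mul_atTop

end RHN

/-- if `g = Θ̂(μ, f)` (so `ind g = ind f − 1`), then `ω₁(f̂) − ω₁(f) = f(μ)`. -/
theorem omega1_hat_transform (f g : RHN) (μ : ℝ)
    (hind : 1 ≤ f.ind) (hμ : ∀ k, μ < f.pole k)
    (hgind : g.ind = f.ind - 1)
    (hg : ∀ x : ℝ, x ≠ μ → (∀ k, x ≠ f.pole k) → (∀ k, x ≠ g.pole k) →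
      g.eval x = (μ - x) / (f.eval x - f.eval μ) - f.eval μ) :
    g.omega1 - f.omega1 = f.eval μ := by
  have hEq : g.eval =ᶠ[atTop] thetaHat μ f.eval := by
    filter_upwards [eventually_ne_atTop μ, f.eventually_ne_pole, g.eventually_ne_pole]
      with x hxμ hxf hxg
    exact hg x hxμ hxf hxg
  have hpar : 0 < g.h0 ↔ ¬0 < f.h0 := by
    rw [← RHN.odd_ind_iff, ← RHN.odd_ind_iff, hgind]
    simp [parity_simps]
  rcases f.h0_nonneg.eq_or_lt with hf0 | hf0
  · have hg0 : 0 < g.h0 := hpar.2 hf0.symm.not_gt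
    have hfμ : f.h < f.eval μ := by
      simpa [← hf0] using RHN.h0_mul_add_h_lt_eval (RHN.d_pos_of_one_le_ind hf0.symm hind) hμ
    have hslope : g.h0 = 1 / (f.eval μ - f.h) :=
      tendsto_nhds_unique (by simpa using g.tendsto_eval_sub_div_atTop 0)
        ((tendsto_thetaHat_div_atTop (RHN.tendsto_eval_of_h0_eq_zero hf0.symm) hfμ.ne).congr'
          (hEq.mono fun x hx => by simp only [hx]))
    rw [RHN.omega1_of_h0_pos hg0, RHN.omega1_of_h0_eq_zero hf0.symm, hslope, one_div_one_div]
    ring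
  · have hg0 : g.h0 = 0 := (g.h0_nonneg.eq_or_lt.resolve_right fun h => hpar.1 h hf0).symm
    have hconst : g.h = -1 / f.h0 - f.eval μ :=
      tendsto_nhds_unique (RHN.tendsto_eval_of_h0_eq_zero hg0)
        ((tendsto_thetaHat_atTop (f.tendsto_eval_sub_div_atTop _) hf0.ne').congr' hEq.symm)
    rw [RHN.omega1_of_h0_pos hf0, RHN.omega1_of_h0_eq_zero hg0, hconst]
    ring
end

section
/- Define, for a rational Herglotz–Nevanlinna function f(λ) = h₀λ + h + Σ_{k=1}^d δ_k/(h_k−λ): ω₁ := 1/h₀ and ω₂ := h/h₀ − Σ h_k if h₀ > 0; ω₁ := −h and ω₂ := −Σ h_k if h₀ = 0. Let ind f ≥ 1, let μ be less than the smallest pole of f, and let f̂ := Θ̂(μ, f), so that ind f̂ = ind f − 1, with associated ω̂₁, ω̂₂. Then ω̂₁² + 2ω̂₂ − ω₁² − 2ω₂ = μ + (−1)^{ℓ_f + ind f}(f(μ)² + μ), where ℓ_f = −1 for rational Herglotz–Nevanlinna f. -/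
open scoped BigOperators

open Polynomial Finset

variable {ι : Type*}

lemma prod_X_sub_C_dvd_of_isRoot [DecidableEq ι] (s : Finset ι) (r : ι → ℝ) (p : Polynomial ℝ)
    (hinj : ∀ i ∈ s, ∀ j ∈ s, r i = r j → i = j)
    (hroot : ∀ i ∈ s, p.IsRoot (r i)) : (∏ i ∈ s, (X - C (r i))) ∣ p := by
  induction s using Finset.induction_on generalizing p with
  | empty => simp
  | @insert a s ha ih =>
    obtain ⟨q, hq⟩ := (dvd_iff_isRoot).2 (hroot a (mem_insert_self a s))
    rw [Finset.prod_insert ha, hq]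
    refine mul_dvd_mul_left _ (ih q (fun i hi j hj hij => hinj i (mem_insert_of_mem hi) j
      (mem_insert_of_mem hj) hij) ?_)
    intro i hi
    have h0 : p.eval (r i) = 0 := hroot i (mem_insert_of_mem hi)
    rw [hq] at h0
    simp only [eval_mul, eval_sub, eval_X, eval_C] at h0
    have hne : r i - r a ≠ 0 := by
      intro hc
      have : i = a := hinj i (mem_insert_of_mem hi) a (mem_insert_self a s) (sub_eq_zero.mp hc)
      exact ha (this ▸ hi)
    exact (mul_eq_zero.mp h0).resolve_left hne

namespace RHN2

noncomputable def Dp (d : ℕ) (pole : Fin d → ℝ) : Polynomial ℝ := ∏ k, (X - C (pole k))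

noncomputable def Ep (d : ℕ) (residue pole : Fin d → ℝ) : Polynomial ℝ :=
  ∑ k, C (residue k) * ∏ j ∈ Finset.univ.erase k, (X - C (pole j))

noncomputable def Pp (d : ℕ) (h0 b : ℝ) (residue pole : Fin d → ℝ) : Polynomial ℝ :=
  (C h0 * X + C b) * Dp d pole - Ep d residue pole

lemma monic_Dp (d : ℕ) (pole : Fin d → ℝ) : (Dp d pole).Monic :=
  monic_prod_of_monic _ _ fun k _ => monic_X_sub_C _

lemma natDegree_Dp (d : ℕ) (pole : Fin d → ℝ) : (Dp d pole).natDegree = d := by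
  rw [Dp, natDegree_prod_of_monic _ _ fun k _ => monic_X_sub_C _]
  simp

lemma nextCoeff_Dp (d : ℕ) (pole : Fin d → ℝ) :
    (Dp d pole).nextCoeff = -∑ k, pole k :=
  prod_X_sub_C_nextCoeff _

lemma coeff_Dp_self (d : ℕ) (pole : Fin d → ℝ) : (Dp d pole).coeff d = 1 := by
  have := (monic_Dp d pole).coeff_natDegree
  rwa [natDegree_Dp] at this

lemma coeff_Dp_pred (d : ℕ) (pole : Fin d → ℝ) (hd : 1 ≤ d) :
    (Dp d pole).coeff (d - 1) = -∑ k, pole k := by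
  have h1 : 0 < (Dp d pole).natDegree := by rw [natDegree_Dp]; omega
  have := nextCoeff_of_natDegree_pos h1
  rw [nextCoeff_Dp, natDegree_Dp] at this
  exact this.symm

lemma coeff_Ep (d : ℕ) (residue pole : Fin d → ℝ) {j : ℕ} (hj : d ≤ j) :
    (Ep d residue pole).coeff j = 0 := by
  rw [Ep, finset_sum_coeff]
  refine Finset.sum_eq_zero fun k _ => ?_
  apply coeff_eq_zero_of_natDegree_lt
  calc (C (residue k) * ∏ j ∈ Finset.univ.erase k, (X - C (pole j))).natDegree
      ≤ (∏ j ∈ Finset.univ.erase k, (X - C (pole j))).natDegree := natDegree_C_mul_le _ _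
    _ = (Finset.univ.erase k).card := by
        rw [natDegree_prod_of_monic _ _ fun i _ => monic_X_sub_C _]; simp
    _ = d - 1 := by rw [Finset.card_erase_of_mem (mem_univ k)]; simp
    _ < j := by have : 0 < d := k.pos; omega

lemma eval_Dp (d : ℕ) (pole : Fin d → ℝ) (x : ℝ) :
    (Dp d pole).eval x = ∏ k, (x - pole k) := by simp [Dp, eval_prod]

lemma eval_Dp_ne_zero (d : ℕ) (pole : Fin d → ℝ) (x : ℝ) (hx : ∀ k, x ≠ pole k) :
    (Dp d pole).eval x ≠ 0 := by
  rw [eval_Dp]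
  exact Finset.prod_ne_zero_iff.2 fun k _ => sub_ne_zero.2 (hx k)

end RHN2

namespace RHN2

variable {d : ℕ} {h0 b : ℝ} {residue pole : Fin d → ℝ}

lemma eval_Ep (x : ℝ) (hx : ∀ k, x ≠ pole k) :
    (Ep d residue pole).eval x
      = -(∑ k, residue k / (pole k - x)) * (Dp d pole).eval x := by
  rw [Ep, eval_finset_sum, eval_Dp, neg_mul, Finset.sum_mul, ← Finset.sum_neg_distrib]
  refine Finset.sum_congr rfl fun k _ => ?_
  rw [eval_mul, eval_C, eval_prod]
  simp only [eval_sub, eval_X, eval_C]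
  rw [show (∏ j, (x - pole j)) = (x - pole k) * ∏ j ∈ Finset.univ.erase k, (x - pole j) from
    (Finset.mul_prod_erase _ _ (mem_univ k)).symm]
  have hne : pole k - x ≠ 0 := sub_ne_zero.2 fun h => hx k h.symm
  field_simp
  ring

lemma eval_Pp (x : ℝ) (hx : ∀ k, x ≠ pole k) :
    (Pp d h0 b residue pole).eval x
      = (h0 * x + b + ∑ k, residue k / (pole k - x)) * (Dp d pole).eval x := by
  rw [Pp, eval_sub, eval_mul, eval_Ep x hx]
  simp only [eval_add, eval_mul, eval_C, eval_X]
  ring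

lemma natDegree_Ep_le : (Ep d residue pole).natDegree ≤ d := by
  rw [Ep]
  refine Polynomial.natDegree_sum_le_of_forall_le _ _ fun k _ => ?_
  calc (C (residue k) * ∏ j ∈ Finset.univ.erase k, (X - C (pole j))).natDegree
      ≤ (∏ j ∈ Finset.univ.erase k, (X - C (pole j))).natDegree := natDegree_C_mul_le _ _
    _ = (Finset.univ.erase k).card := by
        rw [natDegree_prod_of_monic _ _ fun i _ => monic_X_sub_C _]; simp
    _ ≤ d := by
        rw [Finset.card_erase_of_mem (mem_univ k), Finset.card_univ, Fintype.card_fin]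
        omega

lemma natDegree_Pp_zero_le : (Pp d 0 b residue pole).natDegree ≤ d := by
  rw [Pp]
  refine (natDegree_sub_le _ _).trans (max_le ?_ natDegree_Ep_le)
  simp only [map_zero, zero_mul, zero_add]
  exact (natDegree_C_mul_le _ _).trans (natDegree_Dp d pole).le

lemma natDegree_Pp_le : (Pp d h0 b residue pole).natDegree ≤ d + 1 := by
  rw [Pp]
  refine (natDegree_sub_le _ _).trans (max_le ?_ (natDegree_Ep_le.trans (by omega)))
  refine (natDegree_mul_le).trans ?_
  have h1 : (C h0 * X + C b).natDegree ≤ 1 :=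
    (natDegree_add_le _ _).trans
      (max_le ((natDegree_C_mul_le _ _).trans natDegree_X.le) (by simp))
  have := natDegree_C_mul_le h0 (X : Polynomial ℝ)
  rw [natDegree_Dp]
  omega

lemma coeff_Pp_zero : (Pp d 0 b residue pole).coeff d = b := by
  rw [Pp, coeff_sub, coeff_Ep _ _ _ le_rfl]
  simp [coeff_C_mul, coeff_Dp_self]

lemma coeff_Pp_top (hh0 : h0 ≠ 0) :
    (Pp d h0 b residue pole).coeff (d + 1) = h0 ∧
    (Pp d h0 b residue pole).coeff d = b - h0 * ∑ k, pole k := by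
  have hb : h0 * (b / h0) = b := by field_simp
  have hM : Pp d h0 b residue pole
      = C h0 * ((X + C (b / h0)) * Dp d pole) - Ep d residue pole := by
    rw [Pp, ← mul_assoc, mul_add (C h0), ← C_mul, hb]
  have hMm : ((X + C (b / h0)) * Dp d pole).Monic := (monic_X_add_C _).mul (monic_Dp d pole)
  have hMd : ((X + C (b / h0)) * Dp d pole).natDegree = d + 1 := by
    rw [(monic_X_add_C _).natDegree_mul (monic_Dp d pole), natDegree_X_add_C, natDegree_Dp]
    omega
  constructor
  · rw [hM, coeff_sub, coeff_C_mul, coeff_Ep _ _ _ (by omega)]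
    have h1 : ((X + C (b / h0)) * Dp d pole).coeff (d + 1) = 1 := by
      have := hMm.coeff_natDegree; rwa [hMd] at this
    rw [h1]; ring
  · rw [hM, coeff_sub, coeff_C_mul, coeff_Ep _ _ _ le_rfl]
    have h2 : ((X + C (b / h0)) * Dp d pole).coeff d = b / h0 + -∑ k, pole k := by
      have h3 := nextCoeff_of_natDegree_pos (p := (X + C (b / h0)) * Dp d pole)
        (by rw [hMd]; omega)
      rw [hMd, Nat.add_sub_cancel] at h3
      rw [← h3, (monic_X_add_C _).nextCoeff_mul (monic_Dp d pole), nextCoeff_X_add_C,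
        nextCoeff_Dp]
    rw [h2, sub_zero, mul_add, hb]
    ring

lemma coeff_R_top (n : ℕ) (μ : ℝ) (pole' : Fin n → ℝ) :
    ((C μ - X) * Dp n pole').coeff (n + 1) = -1 ∧
    ((C μ - X) * Dp n pole').coeff n = μ + ∑ k, pole' k := by
  have hrw : (C μ - X) * Dp n pole' = -((X - C μ) * Dp n pole') := by ring
  have hMm : ((X - C μ) * Dp n pole').Monic := (monic_X_sub_C _).mul (monic_Dp n pole')
  have hMd : ((X - C μ) * Dp n pole').natDegree = n + 1 := by
    rw [(monic_X_sub_C _).natDegree_mul (monic_Dp n pole'), natDegree_X_sub_C, natDegree_Dp]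
    omega
  constructor
  · rw [hrw, coeff_neg]
    have h1 := hMm.coeff_natDegree
    rw [hMd] at h1
    rw [h1]
  · rw [hrw, coeff_neg]
    have h3 := nextCoeff_of_natDegree_pos (p := (X - C μ) * Dp n pole') (by rw [hMd]; omega)
    rw [hMd, Nat.add_sub_cancel] at h3
    rw [← h3, (monic_X_sub_C _).nextCoeff_mul (monic_Dp n pole'), nextCoeff_X_sub_C,
      nextCoeff_Dp]
    ring

end RHN2

section KeyIdentity

open Polynomial Finset

lemma key_identity (f g : RHN) (μ : ℝ)
    (hg : ∀ x : ℝ, x ≠ μ → (∀ k, x ≠ f.pole k) → (∀ k, x ≠ g.pole k) →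
      g.eval x = (μ - x) / (f.eval x - f.eval μ) - f.eval μ)
    (hPf : RHN2.Pp f.d f.h0 (f.h - f.eval μ) f.residue f.pole ≠ 0)
    (hPgdeg : (RHN2.Pp g.d g.h0 (g.h + f.eval μ) g.residue g.pole).natDegree ≤ f.d) :
    ∃ α : ℝ,
      RHN2.Pp g.d g.h0 (g.h + f.eval μ) g.residue g.pole = RHN2.Dp f.d f.pole * C α ∧
      C α * RHN2.Pp f.d f.h0 (f.h - f.eval μ) f.residue f.pole
        = (C μ - X) * RHN2.Dp g.d g.pole := by
  set m := f.eval μ with hm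
  set Pf := RHN2.Pp f.d f.h0 (f.h - m) f.residue f.pole with hPfdef
  set Pg := RHN2.Pp g.d g.h0 (g.h + m) g.residue g.pole with hPgdef
  set Df := RHN2.Dp f.d f.pole with hDfdef
  set Dg := RHN2.Dp g.d g.pole with hDgdef
  have key : Pg * Pf = (C μ - X) * Dg * Df := by
    apply Polynomial.eq_of_infinite_eval_eq
    have hfin : (({μ} : Set ℝ) ∪ Set.range f.pole ∪ Set.range g.pole
        ∪ {x | Pf.IsRoot x}).Finite :=
      (((Set.finite_singleton μ).union (Set.finite_range f.pole)).union
        (Set.finite_range g.pole)).union (Polynomial.finite_setOf_isRoot hPf)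
    refine Set.Infinite.mono ?_ hfin.infinite_compl
    intro x hx
    simp only [Set.mem_compl_iff, Set.mem_union, Set.mem_singleton_iff, Set.mem_range,
      Set.mem_setOf_eq, not_or, not_exists] at hx
    obtain ⟨⟨⟨hxμ, hxf⟩, hxg⟩, hxroot⟩ := hx
    have hxf' : ∀ k, x ≠ f.pole k := fun k h => hxf k h.symm
    have hxg' : ∀ k, x ≠ g.pole k := fun k h => hxg k h.symm
    have hDfx : Df.eval x ≠ 0 := RHN2.eval_Dp_ne_zero _ _ _ hxf'
    have hDgx : Dg.eval x ≠ 0 := RHN2.eval_Dp_ne_zero _ _ _ hxg'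
    have hPfx : Pf.eval x = (f.eval x - m) * Df.eval x := by
      rw [hPfdef, hDfdef, RHN2.eval_Pp x hxf', RHN.eval]
      ring
    have hPgx : Pg.eval x = (g.eval x + m) * Dg.eval x := by
      rw [hPgdef, hDgdef, RHN2.eval_Pp x hxg', RHN.eval]
      ring
    have hfm : f.eval x - m ≠ 0 := by
      intro h
      exact hxroot (by rw [Polynomial.IsRoot, hPfx, h, zero_mul])
    have hgx := hg x hxμ hxf' hxg'
    simp only [Set.mem_setOf_eq]
    rw [eval_mul, eval_mul, eval_mul, eval_sub, eval_C, eval_X, hPfx, hPgx, hgx]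
    field_simp
    ring
  have hroots : ∀ k, Pg.IsRoot (f.pole k) := by
    intro k
    have hkey := congrArg (Polynomial.eval (f.pole k)) key
    simp only [eval_mul] at hkey
    have hDfk : Df.eval (f.pole k) = 0 := by
      rw [hDfdef, RHN2.eval_Dp]
      exact Finset.prod_eq_zero (mem_univ k) (by ring)
    rw [hDfk, mul_zero] at hkey
    have hPfk : Pf.eval (f.pole k)
        = -(f.residue k * ∏ j ∈ Finset.univ.erase k, (f.pole k - f.pole j)) := by
      rw [hPfdef, RHN2.Pp, eval_sub, eval_mul]
      rw [show (RHN2.Dp f.d f.pole).eval (f.pole k) = 0 from hDfk, mul_zero, zero_sub]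
      congr 1
      rw [RHN2.Ep, eval_finset_sum, Finset.sum_eq_single k]
      · simp [eval_prod]
      · intro j _ hj
        rw [eval_mul, eval_C, eval_prod]
        refine mul_eq_zero_of_right _ (Finset.prod_eq_zero
          (Finset.mem_erase.mpr ⟨fun h => hj h.symm, mem_univ k⟩) (by simp))
      · simp
    have hPfk0 : Pf.eval (f.pole k) ≠ 0 := by
      rw [hPfk, neg_ne_zero]
      refine mul_ne_zero (f.residue_pos k).ne' (Finset.prod_ne_zero_iff.2 fun j hj => ?_)
      have hjk : j ≠ k := (Finset.mem_erase.mp hj).1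
      exact sub_ne_zero.2 fun h => hjk (f.pole_strictMono.injective h.symm)
    exact (mul_eq_zero.mp hkey).resolve_right hPfk0
  have hdvd : Df ∣ Pg := by
    rw [hDfdef, RHN2.Dp]
    exact prod_X_sub_C_dvd_of_isRoot univ f.pole Pg
      (fun i _ j _ hij => f.pole_strictMono.injective hij) (fun i _ => hroots i)
  obtain ⟨Q, hQ⟩ := hdvd
  have hDfne : Df ≠ 0 := (RHN2.monic_Dp f.d f.pole).ne_zero
  have hQne : Q ≠ 0 := by
    intro h
    rw [h, mul_zero] at hQ
    rw [hQ, zero_mul] at key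
    have hR : ((C μ - X) * Dg * Df) ≠ 0 := by
      refine mul_ne_zero (mul_ne_zero ?_ (RHN2.monic_Dp g.d g.pole).ne_zero) hDfne
      intro hc
      have := congrArg (Polynomial.coeff · 1) hc
      simp [coeff_sub] at this
    exact hR key.symm
  have hQdeg : Q.natDegree = 0 := by
    have h1 : Pg.natDegree = f.d + Q.natDegree := by
      rw [hQ, Polynomial.natDegree_mul hDfne hQne, hDfdef, RHN2.natDegree_Dp]
    omega
  have hPgC : Pg = Df * C (Q.coeff 0) := by
    rw [hQ, ← Polynomial.eq_C_of_natDegree_eq_zero hQdeg]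
  refine ⟨Q.coeff 0, hPgC, ?_⟩
  have h2 : (C (Q.coeff 0) * Pf) * Df = ((C μ - X) * Dg) * Df := by
    calc (C (Q.coeff 0) * Pf) * Df = Pg * Pf := by rw [hPgC]; ring
      _ = (C μ - X) * Dg * Df := key
  exact mul_right_cancel₀ hDfne h2

end KeyIdentity

/-- if `g = Θ̂(μ, f)` (so `ind g = ind f − 1`), then
`ω̂₁² + 2ω̂₂ − ω₁² − 2ω₂ = μ + (−1)^{ℓ_f + ind f}(f(μ)² + μ)` with `ℓ_f = −1`,
i.e. the exponent is `ind f − 1`. -/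
theorem omega_hat_transform (f g : RHN) (μ : ℝ)
    (hind : 1 ≤ f.ind) (hμ : ∀ k, μ < f.pole k)
    (hgind : g.ind = f.ind - 1)
    (hg : ∀ x : ℝ, x ≠ μ → (∀ k, x ≠ f.pole k) → (∀ k, x ≠ g.pole k) →
      g.eval x = (μ - x) / (f.eval x - f.eval μ) - f.eval μ) :
    g.omega1 ^ 2 + 2 * g.omega2 - f.omega1 ^ 2 - 2 * f.omega2 =
      μ + (-1 : ℝ) ^ (f.ind - 1) * ((f.eval μ) ^ 2 + μ) := by
  classical
  set m := f.eval μ with hm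
  by_cases hA : 0 < f.h0
  · -- Case A : `ind f` odd
    have hf0 : f.h0 ≠ 0 := ne_of_gt hA
    have find : f.ind = 2 * (f.d : ℤ) + 1 := by rw [RHN.ind, if_pos hA]
    have hgnot : ¬ 0 < g.h0 := by
      intro hgpos
      have : g.ind = 2 * (g.d : ℤ) + 1 := by rw [RHN.ind, if_pos hgpos]
      omega
    have hg0 : g.h0 = 0 := le_antisymm (not_lt.mp hgnot) g.h0_nonneg
    have gind : g.ind = 2 * (g.d : ℤ) := by rw [RHN.ind, if_neg hgnot]
    have hgd : g.d = f.d := by omega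
    have hPftop := RHN2.coeff_Pp_top (d := f.d) (b := f.h - m)
      (residue := f.residue) (pole := f.pole) hf0
    have hPf : RHN2.Pp f.d f.h0 (f.h - m) f.residue f.pole ≠ 0 := by
      intro h
      rw [h] at hPftop
      simp only [Polynomial.coeff_zero] at hPftop
      exact hf0 hPftop.1.symm
    have hPgdeg : (RHN2.Pp g.d g.h0 (g.h + m) g.residue g.pole).natDegree ≤ f.d := by
      rw [hg0, ← hgd]
      exact RHN2.natDegree_Pp_zero_le
    obtain ⟨α, hPgC, hred⟩ := key_identity f g μ hg hPf hPgdeg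
    have eq1 : α * f.h0 = -1 := by
      have hc : (Polynomial.C α * RHN2.Pp f.d f.h0 (f.h - m) f.residue f.pole).coeff (g.d + 1)
          = ((Polynomial.C μ - Polynomial.X) * RHN2.Dp g.d g.pole).coeff (g.d + 1) := by
        rw [hred]
      rw [(RHN2.coeff_R_top g.d μ g.pole).1] at hc
      conv_lhs at hc => rw [hgd]
      rwa [Polynomial.coeff_C_mul, hPftop.1] at hc
    have eq2 : α * (f.h - m - f.h0 * ∑ k, f.pole k) = μ + ∑ k, g.pole k := by
      have hc : (Polynomial.C α * RHN2.Pp f.d f.h0 (f.h - m) f.residue f.pole).coeff g.d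
          = ((Polynomial.C μ - Polynomial.X) * RHN2.Dp g.d g.pole).coeff g.d := by
        rw [hred]
      rw [(RHN2.coeff_R_top g.d μ g.pole).2] at hc
      conv_lhs at hc => rw [hgd]
      rw [Polynomial.coeff_C_mul, hPftop.2] at hc
      rw [show f.h - m - f.h0 * ∑ k, f.pole k = f.h - m - f.h0 * ∑ k, f.pole k from rfl]
      linarith [hc]
    have eq3 : g.h + m = α := by
      have hc : (RHN2.Pp g.d g.h0 (g.h + m) g.residue g.pole).coeff g.d
          = (RHN2.Dp f.d f.pole * Polynomial.C α).coeff g.d := by rw [hPgC]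
      rw [hg0, RHN2.coeff_Pp_zero, Polynomial.coeff_mul_C] at hc
      conv_rhs at hc => rw [hgd]
      rw [RHN2.coeff_Dp_self] at hc
      linarith [hc]
    have hfodd : Odd f.ind := ⟨(f.d : ℤ), by omega⟩
    have hgeven : ¬ Odd g.ind := by
      rw [Int.not_odd_iff_even]
      exact ⟨(g.d : ℤ), by omega⟩
    have hpow : (-1 : ℝ) ^ (f.ind - 1) = 1 := Even.neg_one_zpow ⟨(f.d : ℤ), by omega⟩
    rw [RHN.omega1, RHN.omega2, RHN.omega1, RHN.omega2, if_pos hfodd, if_pos hfodd,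
      if_neg hgeven, if_neg hgeven, hpow]
    have hα : α = -1 / f.h0 := by rw [eq_div_iff hf0]; exact eq1
    have hSg : (∑ k, g.pole k) = α * (f.h - m) + (∑ k, f.pole k) - μ := by
      linear_combination -eq2 - (∑ k, f.pole k) * eq1
    have hgh : g.h = α - m := by linarith [eq3]
    rw [hgh, hSg, hα]
    field_simp
    ring
  · -- Case B : `ind f` even
    have hf0 : f.h0 = 0 := le_antisymm (not_lt.mp hA) f.h0_nonneg
    have find : f.ind = 2 * (f.d : ℤ) := by rw [RHN.ind, if_neg hA]
    have hd1 : 1 ≤ f.d := by omega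
    have hgpos : 0 < g.h0 := by
      by_contra hgnot
      have : g.ind = 2 * (g.d : ℤ) := by rw [RHN.ind, if_neg hgnot]
      omega
    have hg0' : g.h0 ≠ 0 := ne_of_gt hgpos
    have gind : g.ind = 2 * (g.d : ℤ) + 1 := by rw [RHN.ind, if_pos hgpos]
    have hgd : g.d + 1 = f.d := by omega
    have hm2 : m = f.h + ∑ k, f.residue k / (f.pole k - μ) := by
      rw [hm, RHN.eval, hf0]; ring
    have hpos : 0 < ∑ k, f.residue k / (f.pole k - μ) := by
      have hne : Nonempty (Fin f.d) := ⟨⟨0, hd1⟩⟩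
      exact Finset.sum_pos (fun k _ => div_pos (f.residue_pos k) (sub_pos.2 (hμ k)))
        Finset.univ_nonempty
    have hmh : f.h < m := by linarith
    have hPfc : (RHN2.Pp f.d f.h0 (f.h - m) f.residue f.pole).coeff f.d = f.h - m := by
      rw [hf0]; exact RHN2.coeff_Pp_zero
    have hPf : RHN2.Pp f.d f.h0 (f.h - m) f.residue f.pole ≠ 0 := by
      intro h
      rw [h] at hPfc
      simp only [Polynomial.coeff_zero] at hPfc
      linarith
    have hPgdeg : (RHN2.Pp g.d g.h0 (g.h + m) g.residue g.pole).natDegree ≤ f.d :=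
      RHN2.natDegree_Pp_le.trans (by omega)
    obtain ⟨α, hPgC, hred⟩ := key_identity f g μ hg hPf hPgdeg
    have hPgtop := RHN2.coeff_Pp_top (d := g.d) (b := g.h + m)
      (residue := g.residue) (pole := g.pole) hg0'
    have eq1 : g.h0 = α := by
      have hc : (RHN2.Pp g.d g.h0 (g.h + m) g.residue g.pole).coeff (g.d + 1)
          = (RHN2.Dp f.d f.pole * Polynomial.C α).coeff (g.d + 1) := by rw [hPgC]
      rw [hPgtop.1, Polynomial.coeff_mul_C] at hc
      conv_rhs at hc => rw [hgd]
      rw [RHN2.coeff_Dp_self] at hc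
      linarith [hc]
    have eq2 : g.h + m - g.h0 * (∑ k, g.pole k) = -(∑ k, f.pole k) * α := by
      have hc : (RHN2.Pp g.d g.h0 (g.h + m) g.residue g.pole).coeff g.d
          = (RHN2.Dp f.d f.pole * Polynomial.C α).coeff g.d := by rw [hPgC]
      rw [hPgtop.2, Polynomial.coeff_mul_C] at hc
      have hgd' : g.d = f.d - 1 := by omega
      conv_rhs at hc => rw [hgd']
      rw [RHN2.coeff_Dp_pred _ _ hd1] at hc
      linarith [hc]
    have eq3 : α * (f.h - m) = -1 := by
      have hc : (Polynomial.C α * RHN2.Pp f.d f.h0 (f.h - m) f.residue f.pole).coeff (g.d + 1)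
          = ((Polynomial.C μ - Polynomial.X) * RHN2.Dp g.d g.pole).coeff (g.d + 1) := by
        rw [hred]
      rw [(RHN2.coeff_R_top g.d μ g.pole).1] at hc
      conv_lhs at hc => rw [hgd]
      rwa [Polynomial.coeff_C_mul, hPfc] at hc
    have hfnotodd : ¬ Odd f.ind := by
      rw [Int.not_odd_iff_even]
      exact ⟨(f.d : ℤ), by omega⟩
    have hgodd : Odd g.ind := ⟨(g.d : ℤ), by omega⟩
    have hpow : (-1 : ℝ) ^ (f.ind - 1) = -1 := Odd.neg_one_zpow ⟨(g.d : ℤ), by omega⟩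
    rw [RHN.omega1, RHN.omega2, RHN.omega1, RHN.omega2, if_neg hfnotodd, if_neg hfnotodd,
      if_pos hgodd, if_pos hgodd, hpow]
    rw [← eq1] at eq3
    have hv1 : 1 / g.h0 = m - f.h := by
      rw [div_eq_iff hg0']
      linear_combination eq3
    have hv2 : g.h / g.h0 - (∑ k, g.pole k) = -(∑ k, f.pole k) - m * (m - f.h) := by
      rw [← hv1]
      field_simp
      linear_combination eq2 + (∑ k, f.pole k) * eq1
    rw [hv1, hv2]
    ring
end

section
/- Suppose two sequences satisfy √λ_n = n − (M+N)/2 + σ/(πn) + ℓ₂(1/n) and γ_n = (π/2)(n − (M+N)/2)^{2M}(1 + ℓ₂(1/n)) with λ₀ < λ₁ < …, γ_n > 0, σ ∈ ℝ, M, N ∈ ℤ. Fix K ≥ 1, choose λ_{−K} < … < λ_{−1} < λ₀ and γ_{−K}, …, γ_{−1} > 0, and define λ̃_n := λ_{n−K} and γ̃_n := γ_{n−K} · Π_{m=0}^{min{n,K}−1} (λ_{n−K} − λ_{m−K}) for n ≥ 0. Then the sequences {λ̃_n} and {γ̃_n} are again strictly increasing resp. positive and satisfy the same form of asymptotics with M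 and N replaced by M + K and N + K: √λ̃_n = n − (M+N)/2 − K + σ/(πn) + ℓ₂(1/n) and γ̃_n = (π/2)(n − (M+N)/2 − K)^{2(M+K)}(1 + ℓ₂(1/n)). -/
/-!
Write `t_n = n - (M + N) / 2`. The hypothesis on `√λ_n` says `√λ_n = t_n (1 + ℓ₂(1/n))`, because
`σ / (π n t_n) = O(1/n²)`; squaring and subtracting a constant `C` (which costs `C / t_n² = O(1/n²)`)
gives `λ_n - C = t_n² (1 + ℓ₂(1/n))`. Factors `1 + ℓ₂(1/n)` are closed under finite products, since
`ℓ₂(1/n)` sequences tend to `0`; so `γ̃_{n+K} = γ_n ∏_{m<K} (λ_n - λ_{m-K})` equals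
`(π/2) t_n^{2M} (t_n²)^K (1 + ℓ₂(1/n))`. Finally, shifting the index by `K` preserves `ℓ₂(1/n)`,
and changes `σ / (π n)` only by `O(1/n²)`.
-/

open Filter Asymptotics Finset Topology

/-- `u = ℓ₂(1/n)` in the notation of the statement. -/
def IsEll2Inv (u : ℕ → ℝ) : Prop := Summable fun n : ℕ => ((n : ℝ) * u n) ^ 2

lemma isEquivalent_natCast_add (a : ℝ) :
    (fun n : ℕ => (n : ℝ) + a) ~[atTop] fun n => (n : ℝ) :=
  IsEquivalent.refl.add_const_of_norm_tendsto_atTop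
    (tendsto_norm_atTop_atTop.comp tendsto_natCast_atTop_atTop)

lemma isBigO_inv_natCast_add (a : ℝ) :
    (fun n : ℕ => ((n : ℝ) + a)⁻¹) =O[atTop] fun n => (n : ℝ)⁻¹ :=
  (isEquivalent_natCast_add a).inv.isBigO

lemma isBigO_inv_natCast_sub (s : ℝ) :
    (fun n : ℕ => ((n : ℝ) - s)⁻¹) =O[atTop] fun n => (n : ℝ)⁻¹ := by
  simpa [sub_eq_add_neg] using isBigO_inv_natCast_add (-s)

namespace IsEll2Inv

variable {u v : ℕ → ℝ}

lemma of_isBigO (hu : IsEll2Inv u) (hvu : v =O[atTop] u) : IsEll2Inv v :=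
  summable_of_isBigO_nat hu (((isBigO_refl (fun n : ℕ => (n : ℝ)) atTop).mul hvu).pow 2)

lemma of_isBigO_inv_sq (h : u =O[atTop] fun n => (n : ℝ)⁻¹ ^ 2) : IsEll2Inv u := by
  refine of_isBigO ?_ h
  have hsq (n : ℕ) : ((n : ℝ) * (n : ℝ)⁻¹ ^ 2) ^ 2 = ((n : ℝ) ^ 2)⁻¹ := by
    rcases eq_or_ne (n : ℝ) 0 with hn | hn
    · simp [hn]
    · field_simp
  simp only [IsEll2Inv, hsq]
  exact Real.summable_nat_pow_inv.2 one_lt_two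

lemma congr' (hu : IsEll2Inv u) (huv : u =ᶠ[atTop] v) : IsEll2Inv v :=
  hu.of_isBigO huv.symm.isBigO

lemma add (hu : IsEll2Inv u) (hv : IsEll2Inv v) : IsEll2Inv fun n => u n + v n :=
  .of_nonneg_of_le (fun _ => sq_nonneg _) (fun n => by
    simpa only [mul_add] using add_sq_le (a := (n : ℝ) * u n) (b := (n : ℝ) * v n))
    ((Summable.add hu hv).mul_left 2)

lemma tendsto_zero (hu : IsEll2Inv u) : Tendsto u atTop (𝓝 0) := by
  have hmul : Tendsto (fun n : ℕ => (n : ℝ) * u n) atTop (𝓝 0) := by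
    rw [tendsto_zero_iff_norm_tendsto_zero]
    simpa [Real.sqrt_sq_eq_abs] using hu.tendsto_atTop_zero.sqrt
  refine IsBigO.trans_tendsto (IsBigO.of_bound 1 ?_) hmul
  filter_upwards [eventually_ge_atTop 1] with n hn
  rw [norm_mul, one_mul]
  exact le_mul_of_one_le_left (norm_nonneg _) (by simpa using hn)

lemma one_add_mul_one_add (hu : IsEll2Inv u) (hv : IsEll2Inv v) :
    IsEll2Inv fun n => (1 + u n) * (1 + v n) - 1 := by
  have huv : IsEll2Inv fun n => u n * v n :=
    hu.of_isBigO (by simpa using (isBigO_refl u atTop).mul (hv.tendsto_zero.isBigO_one ℝ))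
  exact ((hu.add hv).add huv).congr' (.of_forall fun n => by ring)

lemma div_mul_div {x y x' y' : ℕ → ℝ} (h : IsEll2Inv fun n => x n / y n - 1)
    (h' : IsEll2Inv fun n => x' n / y' n - 1) :
    IsEll2Inv fun n => x n * x' n / (y n * y' n) - 1 :=
  (h.one_add_mul_one_add h').congr' (.of_forall fun n => by ring)

lemma prod_div_prod {ι : Type*} {s : Finset ι} {x y : ι → ℕ → ℝ}
    (h : ∀ i ∈ s, IsEll2Inv fun n => x i n / y i n - 1) :
    IsEll2Inv fun n => (∏ i ∈ s, x i n) / (∏ i ∈ s, y i n) - 1 := by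
  classical
  induction s using Finset.induction_on with
  | empty => simp [IsEll2Inv]
  | insert i s hi ih =>
    simp_rw [prod_insert hi]
    exact (h i (mem_insert_self i s)).div_mul_div (ih fun j hj => h j (mem_insert_of_mem hj))

lemma of_comp_add (K : ℕ) (h : IsEll2Inv fun n => u (n + K)) : IsEll2Inv u := by
  rw [IsEll2Inv, ← summable_nat_add_iff K]
  have hshift : (fun n : ℕ => ((n + K : ℕ) : ℝ)) =O[atTop] fun n => (n : ℝ) := by
    simpa using (isEquivalent_natCast_add K).isBigO
  exact summable_of_isBigO_nat h ((hshift.mul (isBigO_refl _ _)).pow 2)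

lemma div_sq_of_sqrt_div {μ t : ℕ → ℝ} (h : IsEll2Inv fun n => √(μ n) / t n - 1) :
    IsEll2Inv fun n => μ n / t n ^ 2 - 1 := by
  refine (h.one_add_mul_one_add h).congr' ?_
  filter_upwards [h.tendsto_zero.eventually_ne (by norm_num : (0 : ℝ) ≠ -1)] with n hn
  -- `√(μ n) ≠ 0` eventually, which rules out the junk value `√x = 0` for `x ≤ 0`
  have hμ : 0 < μ n := by
    by_contra! hμ
    simp [Real.sqrt_eq_zero'.2 hμ] at hn
  conv_rhs => rw [← Real.sq_sqrt hμ.le]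
  ring

lemma sqrt_div_natCast_sub {μ : ℕ → ℝ} {s c : ℝ}
    (h : IsEll2Inv fun n => √(μ n) - ((n : ℝ) - s + c / n)) :
    IsEll2Inv fun n => √(μ n) / ((n : ℝ) - s) - 1 := by
  have hinv := isBigO_inv_natCast_sub s
  have hbdd : (fun n : ℕ => ((n : ℝ) - s)⁻¹) =O[atTop] fun _ => (1 : ℝ) :=
    (hinv.trans_tendsto tendsto_inv_atTop_nhds_zero_nat).isBigO_one ℝ
  have herr : IsEll2Inv fun n => (√(μ n) - ((n : ℝ) - s + c / n)) * ((n : ℝ) - s)⁻¹ :=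
    h.of_isBigO (by simpa using (isBigO_refl _ atTop).mul hbdd)
  have hcorr : IsEll2Inv fun n => c * ((n : ℝ)⁻¹ * ((n : ℝ) - s)⁻¹) :=
    of_isBigO_inv_sq (by simpa [sq] using ((isBigO_refl _ atTop).mul hinv).const_mul_left c)
  refine (herr.add hcorr).congr' ?_
  filter_upwards [tendsto_natCast_atTop_atTop.eventually_gt_atTop s] with n hn
  field_simp [sub_ne_zero.2 hn.ne']
  ring

lemma sub_const_div_sq {μ : ℕ → ℝ} {s c : ℝ}
    (h : IsEll2Inv fun n => √(μ n) - ((n : ℝ) - s + c / n)) (C : ℝ) :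
    IsEll2Inv fun n => (μ n - C) / ((n : ℝ) - s) ^ 2 - 1 := by
  have hinv := isBigO_inv_natCast_sub s
  have hconst : IsEll2Inv fun n => -C * ((n : ℝ) - s)⁻¹ ^ 2 :=
    of_isBigO_inv_sq ((hinv.pow 2).const_mul_left (-C))
  refine ((sqrt_div_natCast_sub h).div_sq_of_sqrt_div.add hconst).congr' (.of_forall fun n => ?_)
  simp only [inv_pow]
  ring

end IsEll2Inv

lemma isEll2Inv_inv_sub_inv_add (a : ℝ) :
    IsEll2Inv fun n : ℕ => (n : ℝ)⁻¹ - ((n : ℝ) + a)⁻¹ := by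
  have hprod : IsEll2Inv fun n : ℕ => a * ((n : ℝ)⁻¹ * ((n : ℝ) + a)⁻¹) := .of_isBigO_inv_sq <| by
    simpa [sq] using ((isBigO_refl _ atTop).mul (isBigO_inv_natCast_add a)).const_mul_left a
  refine hprod.congr' ?_
  filter_upwards [eventually_gt_atTop 0, tendsto_natCast_atTop_atTop.eventually_gt_atTop (-a)]
    with n hn hna
  have : (n : ℝ) + a ≠ 0 := by linarith
  field_simp
  ring

theorem shifted_spectral_data_asymptotics_general
    (M N : ℤ) (σ : ℝ) (K : ℕ)
    (Λ Γ : ℤ → ℝ)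
    (hmono : ∀ m n : ℤ, -(K : ℤ) ≤ m → m < n → Λ m < Λ n)
    (hpos : ∀ n : ℤ, -(K : ℤ) ≤ n → 0 < Γ n)
    (hlam : Summable fun n : ℕ =>
      ((n : ℝ) * (Real.sqrt (Λ (n : ℤ)) -
        ((n : ℝ) - ((M : ℝ) + (N : ℝ)) / 2 + σ / (Real.pi * (n : ℝ))))) ^ 2)
    (hgam : Summable fun n : ℕ =>
      ((n : ℝ) * (Γ (n : ℤ) /
        (Real.pi / 2 * ((n : ℝ) - ((M : ℝ) + (N : ℝ)) / 2) ^ (2 * M)) - 1)) ^ 2) :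
    (StrictMono fun n : ℕ => Λ ((n : ℤ) - (K : ℤ))) ∧
    (∀ n : ℕ, 0 < Γ ((n : ℤ) - (K : ℤ)) *
      ∏ m ∈ Finset.range (min n K), (Λ ((n : ℤ) - (K : ℤ)) - Λ ((m : ℤ) - (K : ℤ)))) ∧
    (Summable fun n : ℕ =>
      ((n : ℝ) * (Real.sqrt (Λ ((n : ℤ) - (K : ℤ))) -
        ((n : ℝ) - ((M : ℝ) + (N : ℝ)) / 2 - (K : ℝ) + σ / (Real.pi * (n : ℝ))))) ^ 2) ∧
    (Summable fun n : ℕ =>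
      ((n : ℝ) * ((Γ ((n : ℤ) - (K : ℤ)) *
          ∏ m ∈ Finset.range (min n K), (Λ ((n : ℤ) - (K : ℤ)) - Λ ((m : ℤ) - (K : ℤ)))) /
        (Real.pi / 2 *
          ((n : ℝ) - ((M : ℝ) + (N : ℝ)) / 2 - (K : ℝ)) ^ (2 * (M + (K : ℤ)))) - 1)) ^ 2) := by
  set s : ℝ := ((M : ℝ) + N) / 2
  have hsqrt : IsEll2Inv fun n => √(Λ n) - ((n : ℝ) - s + σ / Real.pi / n) := by
    simpa only [IsEll2Inv, div_mul_eq_div_div] using hlam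
  refine ⟨fun a b hab => hmono _ _ (by omega) (by omega), fun n => ?_, ?_, ?_⟩
  · refine mul_pos (hpos _ (by omega)) (prod_pos fun m hm => sub_pos.2 (hmono _ _ (by omega) ?_))
    have := (lt_min_iff.1 (mem_range.1 hm)).1
    omega
  · refine IsEll2Inv.of_comp_add K ?_
    refine (hsqrt.add ((isEll2Inv_inv_sub_inv_add K).of_isBigO
      ((isBigO_refl _ _).const_mul_left (σ / Real.pi)))).congr' (.of_forall fun n => ?_)
    simp only [Nat.cast_add, add_sub_cancel_right, div_mul_eq_div_div]
    ring
  · refine IsEll2Inv.of_comp_add K ?_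
    have hfactors : IsEll2Inv fun n =>
        (∏ m ∈ range K, (Λ n - Λ (m - K))) / (∏ m ∈ range K, ((n : ℝ) - s) ^ 2) - 1 :=
      IsEll2Inv.prod_div_prod fun m _ => hsqrt.sub_const_div_sq _
    refine (IsEll2Inv.div_mul_div hgam hfactors).congr' ?_
    filter_upwards [tendsto_natCast_atTop_atTop.eventually_gt_atTop s] with n hn
    have hexp : (2 * (M + K) : ℤ) = 2 * M + (2 * K : ℕ) := by push_cast; ring
    simp only [Nat.cast_add, add_sub_cancel_right, min_eq_right (Nat.le_add_left K n),
      prod_const, card_range]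
    rw [show (n : ℝ) + K - s - K = n - s by ring, hexp, zpow_add₀ (sub_ne_zero.2 hn.ne'),
      zpow_natCast, pow_mul]
    ring

/-- if `{λ_n}_{n≥0}`, `{γ_n}_{n≥0}` satisfy
`√λ_n = n − (M+N)/2 + σ/(πn) + ℓ₂(1/n)` and
`γ_n = (π/2)(n − (M+N)/2)^{2M}(1 + ℓ₂(1/n))`, and one prepends arbitrary
`λ_{−K} < … < λ_{−1} < λ₀` and `γ_{−K}, …, γ_{−1} > 0`, then the shifted sequences
`λ̃_n := λ_{n−K}` and `γ̃_n := γ_{n−K} ∏_{m=0}^{min{n,K}−1} (λ_{n−K} − λ_{m−K})`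
are strictly increasing resp. positive and satisfy the same form of asymptotics with
`M`, `N` replaced by `M + K`, `N + K`. -/
theorem shifted_spectral_data_asymptotics
    (M N : ℤ) (σ : ℝ) (K : ℕ) (hK : 1 ≤ K)
    (Λ Γ : ℤ → ℝ)
    (hmono : ∀ m n : ℤ, -(K : ℤ) ≤ m → m < n → Λ m < Λ n)
    (hpos : ∀ n : ℤ, -(K : ℤ) ≤ n → 0 < Γ n)
    (hlam : Summable fun n : ℕ =>
      ((n : ℝ) * (Real.sqrt (Λ (n : ℤ)) -
        ((n : ℝ) - ((M : ℝ) + (N : ℝ)) / 2 + σ / (Real.pi * (n : ℝ))))) ^ 2)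
    (hgam : Summable fun n : ℕ =>
      ((n : ℝ) * (Γ (n : ℤ) /
        (Real.pi / 2 * ((n : ℝ) - ((M : ℝ) + (N : ℝ)) / 2) ^ (2 * M)) - 1)) ^ 2) :
    (StrictMono fun n : ℕ => Λ ((n : ℤ) - (K : ℤ))) ∧
    (∀ n : ℕ, 0 < Γ ((n : ℤ) - (K : ℤ)) *
      ∏ m ∈ Finset.range (min n K), (Λ ((n : ℤ) - (K : ℤ)) - Λ ((m : ℤ) - (K : ℤ)))) ∧
    (Summable fun n : ℕ =>
      ((n : ℝ) * (Real.sqrt (Λ ((n : ℤ) - (K : ℤ))) -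
        ((n : ℝ) - ((M : ℝ) + (N : ℝ)) / 2 - (K : ℝ) + σ / (Real.pi * (n : ℝ))))) ^ 2) ∧
    (Summable fun n : ℕ =>
      ((n : ℝ) * ((Γ ((n : ℤ) - (K : ℤ)) *
          ∏ m ∈ Finset.range (min n K), (Λ ((n : ℤ) - (K : ℤ)) - Λ ((m : ℤ) - (K : ℤ)))) /
        (Real.pi / 2 *
          ((n : ℝ) - ((M : ℝ) + (N : ℝ)) / 2 - (K : ℝ)) ^ (2 * (M + (K : ℤ)))) - 1)) ^ 2) :=
  shifted_spectral_data_asymptotics_general M N σ K Λ Γ hmono hpos hlam hgam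
end

section
/- Let ℓ ≥ 0 be an integer and let φ be a solution of −φ″ + (ℓ(ℓ+1)/x² + Q(x))φ = 0 on (0, π) with Q continuous near 0 that satisfies φ(x) ∼ x^{ℓ+1}/(2ℓ+1)!! as x → 0⁺, where Q is continuously differentiable at 0 with value Q(0). Then the logarithmic derivative satisfies the refined asymptotics φ′(x)/φ(x) = (ℓ+1)/x + x·Q(0)/(2ℓ+3) + o(x) as x → 0⁺. -/
/-!
The quantity `W = x ^ (ℓ + 1) φ' - (ℓ + 1) x ^ ℓ φ` satisfies `W' = x ^ (ℓ + 1) Q φ`, which is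
`≈ Q(0) x ^ (2ℓ + 2) / (2ℓ + 1)!!` by the assumed asymptotics of `φ`. Being bounded, `W'` forces `W`
to have a limit at `0⁺`, and this limit is `0`: otherwise `(φ / x ^ (ℓ + 1))' = W / x ^ (2ℓ + 2)`
would be too large for `φ / x ^ (ℓ + 1)` to converge. L'Hôpital's rule then gives
`W ~ Q(0) x ^ (2ℓ + 3) / ((2ℓ + 3)(2ℓ + 1)!!)`, and `φ'/φ - (ℓ + 1)/x = W / (x ^ (ℓ + 1) φ)`.
-/

open Filter Asymptotics Set Topology NNReal

theorem exists_tendsto_nhdsGT_of_nnnorm_deriv_le {f f' : ℝ → ℝ} {a : ℝ} {C : ℝ≥0}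
    (hf : ∀ᶠ x in 𝓝[>] a, HasDerivAt f (f' x) x) (hf' : ∀ᶠ x in 𝓝[>] a, ‖f' x‖₊ ≤ C) :
    ∃ L, Tendsto f (𝓝[>] a) (𝓝 L) := by
  obtain ⟨b, hab, hb⟩ := mem_nhdsGT_iff_exists_Ioo_subset.mp (hf.and hf')
  have hlip : LipschitzOnWith C f (Ioo a b) :=
    (convex_Ioo a b).lipschitzOnWith_of_nnnorm_hasDerivWithin_le
      (fun x hx => (hb hx).1.hasDerivWithinAt) fun x hx => (hb hx).2
  obtain ⟨g, hg, hfg⟩ := hlip.extend_real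
  refine ⟨g a, (hg.continuous.tendsto a).mono_left nhdsWithin_le_nhds |>.congr' ?_⟩
  filter_upwards [Ioo_mem_nhdsGT hab] with x hx using (hfg hx).symm

theorem not_eventually_le_abs_mul_deriv {g g' : ℝ → ℝ} {L K : ℝ} (hK : 0 < K)
    (hg : ∀ᶠ x in 𝓝[>] 0, HasDerivAt g (g' x) x) (hlim : Tendsto g (𝓝[>] 0) (𝓝 L)) :
    ¬ ∀ᶠ x in 𝓝[>] 0, K ≤ |x * g' x| := by
  intro hbig
  obtain ⟨b, hb, hsub⟩ := mem_nhdsGT_iff_exists_Ioo_subset.mp (hg.and hbig)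
  have hhalf : Tendsto (fun x : ℝ => x / 2) (𝓝[>] 0) (𝓝[>] 0) := by
    refine tendsto_nhdsWithin_of_tendsto_nhds_of_eventually_within _ ?_ ?_
    · simpa using ((continuous_id.div_const (2 : ℝ)).tendsto 0).mono_left nhdsWithin_le_nhds
    · filter_upwards [self_mem_nhdsWithin] with x (hx : 0 < x) using half_pos hx
  have hclose : Tendsto (fun x => g x - g (x / 2)) (𝓝[>] 0) (𝓝 0) := by
    simpa using hlim.sub (hlim.comp hhalf)
  have hfar : ∀ᶠ x in 𝓝[>] 0, K / 2 ≤ |g x - g (x / 2)| := by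
    filter_upwards [Ioo_mem_nhdsGT hb] with x hx
    have hderiv : ∀ t ∈ Icc (x / 2) x, HasDerivAt g (g' t) t := fun t ht =>
      (hsub ⟨(half_pos hx.1).trans_le ht.1, ht.2.trans_lt hx.2⟩).1
    obtain ⟨ξ, hξ, hslope⟩ := exists_hasDerivAt_eq_slope g g' (half_lt_self hx.1)
      (fun t ht => (hderiv t ht).continuousAt.continuousWithinAt)
      fun t ht => hderiv t (Ioo_subset_Icc_self ht)
    have hξK : K ≤ |ξ * g' ξ| := (hsub ⟨(half_pos hx.1).trans hξ.1, hξ.2.trans hx.2⟩).2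
    -- `|g x - g (x/2)| = (x/2) |g' ξ| ≥ |ξ g' ξ| / 2` since `ξ ≤ x`
    have hξ0 : 0 < ξ := (half_pos hx.1).trans hξ.1
    have hdiff : g x - g (x / 2) = x / 2 * g' ξ := by
      rw [hslope, show x - x / 2 = x / 2 by ring, mul_div_cancel₀ _ (half_pos hx.1).ne']
    rw [hdiff, abs_mul, abs_of_pos (half_pos hx.1)]
    rw [abs_mul, abs_of_pos hξ0] at hξK
    nlinarith [abs_nonneg (g' ξ), hξ.2]
  obtain ⟨x, hxfar, hxclose⟩ :=
    (hfar.and (hclose.eventually (eventually_abs_sub_lt 0 (half_pos hK)))).exists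
  rw [sub_zero] at hxclose
  linarith

/-- The Wronskian of `φ` with `x ^ (ℓ + 1)`, the solution of `-u'' + ℓ(ℓ+1)/x² u = 0` regular
at `0`. -/
noncomputable def freeWronskian (ℓ : ℕ) (φ : ℝ → ℝ) (x : ℝ) : ℝ :=
  x ^ (ℓ + 1) * deriv φ x - (ℓ + 1) * x ^ ℓ * φ x

section

variable {ℓ : ℕ} {φ : ℝ → ℝ} {x : ℝ}

theorem hasDerivAt_freeWronskian {q : ℝ} (hx : x ≠ 0) (hφ : DifferentiableAt ℝ φ x)
    (hφ' : HasDerivAt (deriv φ) ((ℓ * (ℓ + 1) / x ^ 2 + q) * φ x) x) :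
    HasDerivAt (freeWronskian ℓ φ) (x ^ (ℓ + 1) * q * φ x) x := by
  have h := ((hasDerivAt_pow (ℓ + 1) x).mul hφ').sub
    (((hasDerivAt_pow ℓ x).const_mul ((ℓ : ℝ) + 1)).mul hφ.hasDerivAt)
  refine h.congr_deriv ?_
  rcases ℓ with _ | ℓ
  · simp [mul_assoc]
  · simp only [Nat.add_sub_cancel]
    push_cast
    field_simp
    ring

theorem hasDerivAt_div_pow (hx : x ≠ 0) (hφ : DifferentiableAt ℝ φ x) :
    HasDerivAt (fun t => φ t / t ^ (ℓ + 1)) (freeWronskian ℓ φ x / x ^ (2 * ℓ + 2)) x := by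
  refine (hφ.hasDerivAt.div (hasDerivAt_pow (ℓ + 1) x) (pow_ne_zero _ hx)).congr_deriv ?_
  simp only [freeWronskian, Nat.add_sub_cancel]
  push_cast
  field_simp
  ring

theorem deriv_div_sub_eq_freeWronskian_div (hx : x ≠ 0) (hφx : φ x ≠ 0) :
    deriv φ x / φ x - (ℓ + 1) / x = freeWronskian ℓ φ x / (x ^ (ℓ + 1) * φ x) := by
  simp only [freeWronskian]
  field_simp
  ring

end

section Asymptotics

variable {ℓ : ℕ} {q φ : ℝ → ℝ} {q₀ a : ℝ}
  (hφ : ∀ᶠ x in 𝓝[>] 0, DifferentiableAt ℝ φ x)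
  (hφ' : ∀ᶠ x in 𝓝[>] 0, HasDerivAt (deriv φ) ((ℓ * (ℓ + 1) / x ^ 2 + q x) * φ x) x)
  (hq : Tendsto q (𝓝[>] 0) (𝓝 q₀)) (hv : Tendsto (fun x => φ x / x ^ (ℓ + 1)) (𝓝[>] 0) (𝓝 a))
include hφ hφ'

theorem eventually_hasDerivAt_freeWronskian :
    ∀ᶠ x in 𝓝[>] 0, HasDerivAt (freeWronskian ℓ φ)
      (x ^ (2 * ℓ + 2) * (q x * (φ x / x ^ (ℓ + 1)))) x := by
  filter_upwards [hφ, hφ', self_mem_nhdsWithin] with x hφx hφ'x (hx : 0 < x)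
  refine (hasDerivAt_freeWronskian hx.ne' hφx hφ'x).congr_deriv ?_
  field_simp
  ring

include hq hv

theorem tendsto_freeWronskian_nhdsGT_zero :
    Tendsto (freeWronskian ℓ φ) (𝓝[>] 0) (𝓝 0) := by
  have hpow : Tendsto (fun x : ℝ => x ^ (2 * ℓ + 2)) (𝓝[>] 0) (𝓝 0) := by
    simpa using ((continuous_pow (2 * ℓ + 2)).tendsto (0 : ℝ)).mono_left nhdsWithin_le_nhds
  have hW' : Tendsto (fun x => x ^ (2 * ℓ + 2) * (q x * (φ x / x ^ (ℓ + 1)))) (𝓝[>] 0) (𝓝 0) := by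
    simpa using hpow.mul (hq.mul hv)
  obtain ⟨W₀, hW₀⟩ := exists_tendsto_nhdsGT_of_nnnorm_deriv_le
    (eventually_hasDerivAt_freeWronskian hφ hφ')
    (hW'.nnnorm.eventually (eventually_le_nhds (by simp : ‖(0 : ℝ)‖₊ < 1)))
  obtain rfl : W₀ = 0 := by
    by_contra hW₀ne
    have hW₀pos : 0 < |W₀| := abs_pos.mpr hW₀ne
    refine not_eventually_le_abs_mul_deriv (g' := fun x => freeWronskian ℓ φ x / x ^ (2 * ℓ + 2))
      (half_pos hW₀pos) ?_ hv ?_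
    · filter_upwards [hφ, self_mem_nhdsWithin] with x hx (hx0 : 0 < x)
      exact hasDerivAt_div_pow hx0.ne' hx
    · filter_upwards [hW₀.abs.eventually (eventually_gt_nhds (half_lt_self hW₀pos)),
        Ioo_mem_nhdsGT one_pos] with x hfar hx
      rw [show x * (freeWronskian ℓ φ x / x ^ (2 * ℓ + 2)) = freeWronskian ℓ φ x / x ^ (2 * ℓ + 1)
        by field_simp [hx.1.ne']; ring, abs_div, abs_of_pos (pow_pos hx.1 _)]
      exact hfar.le.trans (le_div_self (abs_nonneg _) (pow_pos hx.1 _)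
        (pow_le_one₀ hx.1.le hx.2.le))
  exact hW₀

theorem tendsto_freeWronskian_div_pow :
    Tendsto (fun x => freeWronskian ℓ φ x / x ^ (2 * ℓ + 3)) (𝓝[>] 0)
      (𝓝 (q₀ * a / (2 * ℓ + 3))) := by
  have hpow : Tendsto (fun x : ℝ => x ^ (2 * ℓ + 3)) (𝓝[>] 0) (𝓝 0) := by
    simpa using ((continuous_pow (2 * ℓ + 3)).tendsto (0 : ℝ)).mono_left nhdsWithin_le_nhds
  refine HasDerivAt.lhopital_zero_nhdsGT (eventually_hasDerivAt_freeWronskian hφ hφ')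
    (.of_forall fun x => hasDerivAt_pow (2 * ℓ + 3) x) ?_
    (tendsto_freeWronskian_nhdsGT_zero hφ hφ' hq hv) hpow ?_
  · filter_upwards [self_mem_nhdsWithin] with x (hx : 0 < x)
    positivity
  · refine ((hq.mul hv).div_const (2 * ℓ + 3)).congr' ?_
    filter_upwards [self_mem_nhdsWithin] with x (hx : 0 < x)
    field_simp
    push_cast
    ring

theorem isLittleO_deriv_div_sub (ha : a ≠ 0) :
    (fun x => deriv φ x / φ x - (ℓ + 1) / x - x * q₀ / (2 * ℓ + 3)) =o[𝓝[>] 0] fun x => x := by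
  have hpos : ∀ᶠ x in 𝓝[>] (0 : ℝ), 0 < x := self_mem_nhdsWithin
  rw [isLittleO_iff_tendsto' (hpos.mono fun x hx h => absurd h hx.ne')]
  have hlim := ((tendsto_freeWronskian_div_pow hφ hφ' hq hv).div hv ha).sub_const (q₀ / (2 * ℓ + 3))
  rw [mul_div_right_comm, mul_div_cancel_right₀ _ ha, sub_self] at hlim
  refine hlim.congr' ?_
  filter_upwards [hpos, hv.eventually_ne ha] with x hx hvx
  have hφx : φ x ≠ 0 := left_ne_zero_of_mul (by simpa [div_eq_mul_inv] using hvx)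
  rw [Pi.div_apply, deriv_div_sub_eq_freeWronskian_div hx.ne' hφx]
  field_simp
  ring

end Asymptotics

/-- if `φ` solves `−φ″ + (ℓ(ℓ+1)/x² + Q(x))φ = 0` on `(0,π)` with `Q`
continuously differentiable near `0`, and `φ(x) ∼ x^{ℓ+1}/(2ℓ+1)!!` as `x → 0⁺`, then
`φ′(x)/φ(x) = (ℓ+1)/x + x·Q(0)/(2ℓ+3) + o(x)` as `x → 0⁺`. -/
theorem refined_log_derivative_asymptotics
    (ℓ : ℕ) (Q φ : ℝ → ℝ)
    (hQ : ContDiffOn ℝ 1 Q (Set.Icc 0 Real.pi))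
    (hφ1 : ∀ x ∈ Set.Ioo 0 Real.pi, DifferentiableAt ℝ φ x)
    (hφ2 : ∀ x ∈ Set.Ioo 0 Real.pi, HasDerivAt (deriv φ)
      (((ℓ : ℝ) * ((ℓ : ℝ) + 1) / x ^ 2 + Q x) * φ x) x)
    (hasymp : Tendsto
      (fun x : ℝ => φ x / (x ^ (ℓ + 1) / ∏ k ∈ Finset.range (ℓ + 1), (2 * (k : ℝ) + 1)))
      (nhdsWithin 0 (Set.Ioi 0)) (nhds 1)) :
    (fun x : ℝ => deriv φ x / φ x - ((ℓ : ℝ) + 1) / x - x * Q 0 / (2 * (ℓ : ℝ) + 3))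
      =o[nhdsWithin 0 (Set.Ioi 0)] (fun x : ℝ => x) := by
  set c := ∏ k ∈ Finset.range (ℓ + 1), (2 * (k : ℝ) + 1)
  have hc : c ≠ 0 := (Finset.prod_pos fun k _ => by positivity).ne'
  have hv : Tendsto (fun x => φ x / x ^ (ℓ + 1)) (𝓝[>] 0) (𝓝 (1 / c)) :=
    (hasymp.div_const c).congr fun x => by field_simp
  have hQ0 : Tendsto Q (𝓝[>] 0) (𝓝 (Q 0)) :=
    (hQ.continuousOn 0 ⟨le_rfl, Real.pi_pos.le⟩).mono_of_mem_nhdsWithin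
      (Icc_mem_nhdsGT Real.pi_pos)
  have hsmall : Ioo 0 Real.pi ∈ 𝓝[>] (0 : ℝ) := Ioo_mem_nhdsGT Real.pi_pos
  exact isLittleO_deriv_div_sub (mem_of_superset hsmall hφ1) (mem_of_superset hsmall hφ2) hQ0 hv
    (one_div_ne_zero hc)
end

section
/- In the setting of the Darboux transformation: if φ solves −φ″ + (V − λ)φ = 0, φ₀ := φ(·, λ₀) solves the same equation with λ = λ₀ and has no zeros, and φ̂(x, λ) := (λ₀ − λ)^{−1}(φ′(x,λ) − (φ₀′(x)/φ₀(x))φ(x,λ)) for λ ≠ λ₀, then the identities (φ̂(x, λ) φ₀(x))′ = φ(x, λ) φ₀(x) and (φ(x, λ)/φ₀(x))′ = (λ₀ − λ) φ̂(x, λ)/φ₀(x) hold on (0, π). -/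
/-!
With `φ̂ = (λ₀ - λ)⁻¹ (φ' - (φ₀'/φ₀) φ)`, the product `φ̂ φ₀` is `(λ₀ - λ)⁻¹` times the
Wronskian-type expression `φ' φ₀ - φ₀' φ`, whose derivative is `φ'' φ₀ - φ₀'' φ = (λ₀ - λ) φ φ₀`
because the potential `V` cancels. The second identity is the quotient rule, since
`(λ₀ - λ) φ̂ / φ₀ = (φ' φ₀ - φ φ₀') / φ₀²`.
-/

open Filter Topology

noncomputable def darbouxTransform (φ φ0 : ℝ → ℝ) (lam lam0 : ℝ) (t : ℝ) : ℝ :=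
  (lam0 - lam)⁻¹ * (deriv φ t - deriv φ0 t / φ0 t * φ t)

theorem hasDerivAt_deriv_mul_sub_deriv_mul {f g : ℝ → ℝ} {p q x : ℝ}
    (hf : DifferentiableAt ℝ f x) (hg : DifferentiableAt ℝ g x)
    (hf' : HasDerivAt (deriv f) (p * f x) x) (hg' : HasDerivAt (deriv g) (q * g x) x) :
    HasDerivAt (fun t => deriv f t * g t - deriv g t * f t) ((p - q) * f x * g x) x := by
  refine ((hf'.mul hg.hasDerivAt).sub (hg'.mul hf.hasDerivAt)).congr_deriv ?_
  ring

theorem darbouxTransform_mul_self_eq {φ φ0 : ℝ → ℝ} {t : ℝ} (lam lam0 : ℝ) (ht : φ0 t ≠ 0) :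
    darbouxTransform φ φ0 lam lam0 t * φ0 t =
      (lam0 - lam)⁻¹ * (deriv φ t * φ0 t - deriv φ0 t * φ t) := by
  rw [darbouxTransform, mul_assoc, sub_mul, div_mul_eq_mul_div, div_mul_cancel₀ _ ht]

theorem sub_mul_darbouxTransform {lam lam0 : ℝ} (hne : lam ≠ lam0) (φ φ0 : ℝ → ℝ) (t : ℝ) :
    (lam0 - lam) * darbouxTransform φ φ0 lam lam0 t = deriv φ t - deriv φ0 t / φ0 t * φ t :=
  mul_inv_cancel_left₀ (sub_ne_zero.mpr hne.symm) _

theorem hasDerivAt_darbouxTransform_mul {V φ φ0 : ℝ → ℝ} {lam lam0 x : ℝ} (hne : lam ≠ lam0)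
    (hφd : DifferentiableAt ℝ φ x) (hφ : HasDerivAt (deriv φ) ((V x - lam) * φ x) x)
    (hφ0d : DifferentiableAt ℝ φ0 x) (hφ0 : HasDerivAt (deriv φ0) ((V x - lam0) * φ0 x) x)
    (hnz : ∀ᶠ t in 𝓝 x, φ0 t ≠ 0) :
    HasDerivAt (fun t => darbouxTransform φ φ0 lam lam0 t * φ0 t) (φ x * φ0 x) x := by
  have hW := (hasDerivAt_deriv_mul_sub_deriv_mul hφd hφ0d hφ hφ0).const_mul (lam0 - lam)⁻¹
  refine (hW.congr_of_eventuallyEq ?_).congr_deriv ?_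
  · filter_upwards [hnz] with t ht using darbouxTransform_mul_self_eq lam lam0 ht
  · rw [sub_sub_sub_cancel_left, mul_assoc, inv_mul_cancel_left₀ (sub_ne_zero.mpr hne.symm)]

theorem hasDerivAt_div_darbouxTransform {φ φ0 : ℝ → ℝ} {lam lam0 x : ℝ} (hne : lam ≠ lam0)
    (hφd : DifferentiableAt ℝ φ x) (hφ0d : DifferentiableAt ℝ φ0 x) (hx : φ0 x ≠ 0) :
    HasDerivAt (fun t => φ t / φ0 t)
      ((lam0 - lam) * darbouxTransform φ φ0 lam lam0 x / φ0 x) x := by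
  rw [sub_mul_darbouxTransform hne]
  refine (hφd.hasDerivAt.div hφ0d.hasDerivAt hx).congr_deriv ?_
  field_simp

/-- with `φ` a solution of `−φ″ + (V − λ)φ = 0`, `φ₀` a nonvanishing
solution at `λ₀`, and `φ̂(x) := (λ₀ − λ)⁻¹(φ′(x) − (φ₀′(x)/φ₀(x))φ(x))` for `λ ≠ λ₀`,
the identities `(φ̂ φ₀)′ = φ φ₀` and `(φ/φ₀)′ = (λ₀ − λ) φ̂/φ₀` hold on `(0,π)`. -/
theorem darboux_transform_identities
    (V : ℝ → ℝ) (lam lam0 : ℝ) (hne : lam ≠ lam0) (φ φ0 : ℝ → ℝ)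
    (hφd : ∀ x ∈ Set.Ioo 0 Real.pi, DifferentiableAt ℝ φ x)
    (hφ : ∀ x ∈ Set.Ioo 0 Real.pi, HasDerivAt (deriv φ) ((V x - lam) * φ x) x)
    (hφ0d : ∀ x ∈ Set.Ioo 0 Real.pi, DifferentiableAt ℝ φ0 x)
    (hφ0 : ∀ x ∈ Set.Ioo 0 Real.pi, HasDerivAt (deriv φ0) ((V x - lam0) * φ0 x) x)
    (hnz : ∀ x ∈ Set.Ioo 0 Real.pi, φ0 x ≠ 0) :
    ∀ x ∈ Set.Ioo 0 Real.pi,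
      HasDerivAt
        (fun t => ((lam0 - lam)⁻¹ * (deriv φ t - deriv φ0 t / φ0 t * φ t)) * φ0 t)
        (φ x * φ0 x) x ∧
      HasDerivAt (fun t => φ t / φ0 t)
        ((lam0 - lam) *
          ((lam0 - lam)⁻¹ * (deriv φ x - deriv φ0 x / φ0 x * φ x)) / φ0 x) x := by
  intro x hx
  have hnz_nhds : ∀ᶠ t in 𝓝 x, φ0 t ≠ 0 :=
    eventually_of_mem (isOpen_Ioo.mem_nhds hx) hnz
  exact ⟨hasDerivAt_darbouxTransform_mul hne (hφd x hx) (hφ x hx) (hφ0d x hx) (hφ0 x hx) hnz_nhds,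
    hasDerivAt_div_darbouxTransform hne (hφd x hx) (hφ0d x hx) (hnz x hx)⟩
end

section
/- Define Trace-shift: let a ∈ ℝ with 2a ∈ ℤ, b ∈ ℝ, λ₀ ∈ ℝ, and let {λ_n}_{n≥1} be a real sequence with √λ_n = (n−1) − (a−1) + b/(n) + ℓ₂(1/n²)-type asymptotics making both series below converge. Set T := Σ_{n<a} λ_n + Σ_{n=a}(λ_n − b) + Σ_{n>a}(λ_n − (n−a)² − 2b) over n ≥ 0 for the sequence {λ_n}_{n≥0}, and T̂ the analogous sum for the shifted sequence λ̂_n := λ_{n+1} with â := a − 1 and the same b. Then T̂ = T − λ₀ + (a² + 2b)·1_{(−∞,0)}(a) + b·1_{{0}}(a). -/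
/-!
Shifting the sequence by one and lowering `a` by one leaves every summand with index `n ≥ 1`
unchanged (it is the old summand of index `n + 1`, since `n - (a - 1) = (n + 1) - a`), so
`T̂ = T - t₀` where `t₀` is the old summand at `n = 0`; reading off `t₀` according to the sign of
`a` gives the correction terms.
-/

section RegularizedTerm

variable {K : Type*} [CommRing K] [LinearOrder K]

def regularizedTerm (a b x μ : K) : K :=
  if x < a then μ else if x = a then μ - b else μ - (x - a) ^ 2 - 2 * b

theorem regularizedTerm_sub_one [IsStrictOrderedRing K] (a b x μ : K) :
    regularizedTerm (a - 1) b x μ = regularizedTerm a b (x + 1) μ := by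
  have hlt : x < a - 1 ↔ x + 1 < a := lt_sub_iff_add_lt
  have heq : x = a - 1 ↔ x + 1 = a := eq_sub_iff_add_eq
  have hdiff : x - (a - 1) = x + 1 - a := by ring
  simp only [regularizedTerm, hlt, heq, hdiff]

theorem regularizedTerm_zero (a b μ : K) :
    regularizedTerm a b 0 μ =
      μ - (a ^ 2 + 2 * b) * (if a < 0 then 1 else 0) - b * (if a = 0 then 1 else 0) := by
  rcases lt_trichotomy a 0 with ha | rfl | ha
  · simp [regularizedTerm, ha, ha.ne, ha.ne', ha.not_gt]
    ring
  · simp [regularizedTerm]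
  · simp [regularizedTerm, ha, ha.ne', ha.not_gt]

end RegularizedTerm

theorem regularized_trace_shift_general
    (a b : ℝ) (lam : ℕ → ℝ)
    (hT : Summable fun n : ℕ =>
      if (n : ℝ) < a then lam n
      else if (n : ℝ) = a then lam n - b
      else lam n - ((n : ℝ) - a) ^ 2 - 2 * b) :
    (∑' n : ℕ,
      (if (n : ℝ) < a - 1 then lam (n + 1)
       else if (n : ℝ) = a - 1 then lam (n + 1) - b
       else lam (n + 1) - ((n : ℝ) - (a - 1)) ^ 2 - 2 * b)) =
    (∑' n : ℕ,
      (if (n : ℝ) < a then lam n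
       else if (n : ℝ) = a then lam n - b
       else lam n - ((n : ℝ) - a) ^ 2 - 2 * b))
      - lam 0 + (a ^ 2 + 2 * b) * (if a < 0 then 1 else 0)
      + b * (if a = 0 then 1 else 0) := by
  set t : ℕ → ℝ := fun n => regularizedTerm a b (n : ℝ) (lam n)
  have hshift : ∀ n : ℕ, regularizedTerm (a - 1) b (n : ℝ) (lam (n + 1)) = t (n + 1) := by
    intro n
    simp only [t, regularizedTerm_sub_one, Nat.cast_succ]
  have hsplit : ∑' n, t n = t 0 + ∑' n, t (n + 1) := hT.tsum_eq_zero_add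
  have ht0 := regularizedTerm_zero a b (lam 0)
  change ∑' n : ℕ, regularizedTerm (a - 1) b (n : ℝ) (lam (n + 1)) = ∑' n, t n - lam 0 + _ + _
  simp only [t, Nat.cast_zero] at hsplit
  rw [tsum_congr hshift, hsplit, ht0]
  ring

/-- with `T := ∑_{n<a} λ_n + ∑_{n=a}(λ_n − b) + ∑_{n>a}(λ_n − (n−a)² − 2b)`
and `T̂` the analogous regularized sum for the shifted sequence `λ̂_n := λ_{n+1}` with
`â := a − 1` and the same `b` (both series assumed summable), one has
`T̂ = T − λ₀ + (a² + 2b)·1_{(−∞,0)}(a) + b·1_{{0}}(a)`. -/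
theorem regularized_trace_shift
    (a b : ℝ) (ha : ∃ m : ℤ, 2 * a = (m : ℝ)) (lam : ℕ → ℝ)
    (hT : Summable fun n : ℕ =>
      if (n : ℝ) < a then lam n
      else if (n : ℝ) = a then lam n - b
      else lam n - ((n : ℝ) - a) ^ 2 - 2 * b)
    (hThat : Summable fun n : ℕ =>
      if (n : ℝ) < a - 1 then lam (n + 1)
      else if (n : ℝ) = a - 1 then lam (n + 1) - b
      else lam (n + 1) - ((n : ℝ) - (a - 1)) ^ 2 - 2 * b) :
    (∑' n : ℕ,
      (if (n : ℝ) < a - 1 then lam (n + 1)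
       else if (n : ℝ) = a - 1 then lam (n + 1) - b
       else lam (n + 1) - ((n : ℝ) - (a - 1)) ^ 2 - 2 * b)) =
    (∑' n : ℕ,
      (if (n : ℝ) < a then lam n
       else if (n : ℝ) = a then lam n - b
       else lam n - ((n : ℝ) - a) ^ 2 - 2 * b))
      - lam 0 + (a ^ 2 + 2 * b) * (if a < 0 then 1 else 0)
      + b * (if a = 0 then 1 else 0) :=
  regularized_trace_shift_general a b lam hT
end
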